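/- arXiv:1903.09376 — 7 statements merged into one kernel-verified Lean document; each statement's English description precedes it below -/
import Mathlib

section
/- The Riccati terminal value problem K'(t) = 2βK(t) + γ_N K(t)² − λ on [0,T] with K(T) = c has a unique C¹ solution K defined on all of [0,T], and this solution satisfies min{c, k⁺} ≤ K(t) ≤ max{c, k⁺} for all t ∈ [0,T]; in particular K(t) ≥ 0 on [0,T]. -/
open Set Real

/-!
The right-hand side factors as `γ (K - k₁) (K - k₂)` with roots `k₂ ≤ 0 ≤ k₁ = k⁺`. The
substitution `1 / (K - k₁)` makes the equation linear, which gives the solution in closed form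
(with a separate formula when the roots coincide); for `c ≥ k₂` it is, at every `t ≤ T`, a
convex combination of `c` and `k₁`, so it exists on all of `(-∞, T]` and never leaves
`[min c k⁺, max c k⁺]`.
Uniqueness is Grönwall-type uniqueness for a right-hand side that is Lipschitz on the compact set
swept out by any two solutions.
-/

theorem ODE_solution_unique_of_locallyLipschitz_of_mem_Icc_left
    {E : Type*} [NormedAddCommGroup E] [NormedSpace ℝ E] {v : E → E} (hv : LocallyLipschitz v)
    {f g : ℝ → E} {a b : ℝ}
    (hf : ∀ t ∈ Icc a b, HasDerivAt f (v (f t)) t)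
    (hg : ∀ t ∈ Icc a b, HasDerivAt g (v (g t)) t)
    (hb : f b = g b) : EqOn f g (Icc a b) := by
  have hfc := HasDerivAt.continuousOn hf
  have hgc := HasDerivAt.continuousOn hg
  obtain ⟨C, hC⟩ := hv.locallyLipschitzOn.exists_lipschitzOnWith_of_compact
    ((isCompact_Icc.image_of_continuousOn hfc).union (isCompact_Icc.image_of_continuousOn hgc))
  exact ODE_solution_unique_of_mem_Icc_left (fun _ _ ↦ hC) hfc
    (fun t ht ↦ (hf t (Ioc_subset_Icc_self ht)).hasDerivWithinAt)
    (fun t ht ↦ Or.inl (mem_image_of_mem f (Ioc_subset_Icc_self ht))) hgc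
    (fun t ht ↦ (hg t (Ioc_subset_Icc_self ht)).hasDerivWithinAt)
    (fun t ht ↦ Or.inr (mem_image_of_mem g (Ioc_subset_Icc_self ht))) hb

theorem quadratic_eq_mul_sub_mul_sub {γ β lam δ : ℝ} (hγ : γ ≠ 0) (hδ : δ ^ 2 = β ^ 2 + γ * lam)
    (x : ℝ) :
    2 * β * x + γ * x ^ 2 - lam = γ * (x - (-β + δ) / γ) * (x - (-β - δ) / γ) := by
  field_simp
  linear_combination hδ

section Riccati

variable {γ k₁ k₂ c T : ℝ}

noncomputable def riccatiSolution (γ k₁ k₂ c T t : ℝ) : ℝ :=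
  (k₁ * (c - k₂) - k₂ * (c - k₁) * exp (γ * (k₁ - k₂) * (t - T))) /
    (c - k₂ - (c - k₁) * exp (γ * (k₁ - k₂) * (t - T)))

theorem riccatiSolution_exp_le_one (hγ : 0 ≤ γ) (h : k₂ ≤ k₁) {t : ℝ} (ht : t ≤ T) :
    exp (γ * (k₁ - k₂) * (t - T)) ≤ 1 :=
  exp_le_one_iff.2 (mul_nonpos_of_nonneg_of_nonpos (mul_nonneg hγ (sub_nonneg.2 h))
    (sub_nonpos.2 ht))

theorem riccatiSolution_denom_pos (hγ : 0 ≤ γ) (h : k₂ < k₁) (hc : k₂ ≤ c) {t : ℝ} (ht : t ≤ T) :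
    0 < c - k₂ - (c - k₁) * exp (γ * (k₁ - k₂) * (t - T)) := by
  have he1 := riccatiSolution_exp_le_one hγ h.le ht
  have he0 := exp_pos (γ * (k₁ - k₂) * (t - T))
  nlinarith

theorem hasDerivAt_riccatiSolution (hγ : 0 ≤ γ) (h : k₂ < k₁) (hc : k₂ ≤ c) {t : ℝ} (ht : t ≤ T) :
    HasDerivAt (riccatiSolution γ k₁ k₂ c T)
      (γ * (riccatiSolution γ k₁ k₂ c T t - k₁) * (riccatiSolution γ k₁ k₂ c T t - k₂)) t := by
  have hD := (riccatiSolution_denom_pos hγ h hc ht).ne'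
  have he : HasDerivAt (fun t ↦ exp (γ * (k₁ - k₂) * (t - T)))
      (exp (γ * (k₁ - k₂) * (t - T)) * (γ * (k₁ - k₂))) t := by
    simpa using (((hasDerivAt_id t).sub_const T).const_mul (γ * (k₁ - k₂))).exp
  refine (((he.const_mul (k₂ * (c - k₁))).const_sub (k₁ * (c - k₂))).div
    ((he.const_mul (c - k₁)).const_sub (c - k₂)) hD).congr_deriv ?_
  unfold riccatiSolution
  field_simp
  ring

theorem riccatiSolution_self (h : k₂ < k₁) : riccatiSolution γ k₁ k₂ c T T = c := by
  have : c - k₂ - (c - k₁) ≠ 0 := by linarith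
  simp only [riccatiSolution, sub_self, mul_zero, exp_zero, mul_one]
  field_simp
  ring

theorem riccatiSolution_mem_uIcc (hγ : 0 ≤ γ) (h : k₂ < k₁) (hc : k₂ ≤ c) {t : ℝ} (ht : t ≤ T) :
    riccatiSolution γ k₁ k₂ c T t ∈ uIcc c k₁ := by
  have hD := riccatiSolution_denom_pos hγ h hc ht
  have he1 := riccatiSolution_exp_le_one hγ h.le ht
  have he0 := exp_pos (γ * (k₁ - k₂) * (t - T))
  unfold riccatiSolution
  generalize exp (γ * (k₁ - k₂) * (t - T)) = e at *
  rw [← segment_eq_uIcc]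
  refine ⟨(k₁ - k₂) * e / (c - k₂ - (c - k₁) * e), (c - k₂) * (1 - e) / (c - k₂ - (c - k₁) * e),
    by positivity, div_nonneg (mul_nonneg (by linarith) (by linarith)) hD.le, ?_, ?_⟩
  · rw [← add_div, div_eq_one_iff_eq hD.ne']
    ring
  · simp only [smul_eq_mul]
    field_simp
    ring

noncomputable def riccatiSolutionDoubleRoot (γ k c T t : ℝ) : ℝ :=
  k + (c - k) / (1 + γ * (c - k) * (T - t))

variable {k : ℝ}

theorem one_le_riccatiSolutionDoubleRoot_denom (hγ : 0 ≤ γ) (hc : k ≤ c) {t : ℝ} (ht : t ≤ T) :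
    1 ≤ 1 + γ * (c - k) * (T - t) :=
  le_add_of_nonneg_right (mul_nonneg (mul_nonneg hγ (sub_nonneg.2 hc)) (sub_nonneg.2 ht))

theorem hasDerivAt_riccatiSolutionDoubleRoot (hγ : 0 ≤ γ) (hc : k ≤ c) {t : ℝ} (ht : t ≤ T) :
    HasDerivAt (riccatiSolutionDoubleRoot γ k c T)
      (γ * (riccatiSolutionDoubleRoot γ k c T t - k) *
        (riccatiSolutionDoubleRoot γ k c T t - k)) t := by
  have hD := (zero_lt_one.trans_le (one_le_riccatiSolutionDoubleRoot_denom hγ hc ht)).ne'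
  have hD' : HasDerivAt (fun t ↦ 1 + γ * (c - k) * (T - t)) (-(γ * (c - k))) t := by
    simpa using (((hasDerivAt_id t).const_sub T).const_mul (γ * (c - k))).const_add 1
  refine (((hasDerivAt_const t (c - k)).div hD' hD).const_add k).congr_deriv ?_
  unfold riccatiSolutionDoubleRoot
  field_simp
  ring

theorem riccatiSolutionDoubleRoot_self : riccatiSolutionDoubleRoot γ k c T T = c := by
  simp [riccatiSolutionDoubleRoot]

theorem riccatiSolutionDoubleRoot_mem_uIcc (hγ : 0 ≤ γ) (hc : k ≤ c) {t : ℝ} (ht : t ≤ T) :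
    riccatiSolutionDoubleRoot γ k c T t ∈ uIcc c k := by
  have hD := one_le_riccatiSolutionDoubleRoot_denom hγ hc ht
  rw [uIcc_of_ge hc, riccatiSolutionDoubleRoot]
  exact ⟨le_add_of_nonneg_right (div_nonneg (sub_nonneg.2 hc) (zero_le_one.trans hD)),
    by linarith [div_le_self (sub_nonneg.2 hc) hD]⟩

theorem exists_riccati_solution (hγ : 0 ≤ γ) (h : k₂ ≤ k₁) (hc : k₂ ≤ c) :
    ∃ K : ℝ → ℝ, (∀ t ≤ T, HasDerivAt K (γ * (K t - k₁) * (K t - k₂)) t) ∧ K T = c ∧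
      ∀ t ≤ T, K t ∈ uIcc c k₁ := by
  rcases h.lt_or_eq with h | rfl
  · exact ⟨riccatiSolution γ k₁ k₂ c T, fun t ht ↦ hasDerivAt_riccatiSolution hγ h hc ht,
      riccatiSolution_self h, fun t ht ↦ riccatiSolution_mem_uIcc hγ h hc ht⟩
  · exact ⟨riccatiSolutionDoubleRoot γ k₂ c T,
      fun t ht ↦ hasDerivAt_riccatiSolutionDoubleRoot hγ hc ht, riccatiSolutionDoubleRoot_self,
      fun t ht ↦ riccatiSolutionDoubleRoot_mem_uIcc hγ hc ht⟩

end Riccati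

theorem riccati_existence_uniqueness_and_bounds_general
    (N : ℕ) (hN : 2 ≤ N) (T q ε c : ℝ)
    (hc : 0 ≤ c) (hqε : q ^ 2 ≤ ε)
    (β γN lam kplus : ℝ)
    (hγ : γN = (1 - 1 / (N : ℝ)) ^ 2)
    (hlam : lam = ε - q ^ 2)
    (hk : kplus = (-β + Real.sqrt (β ^ 2 + γN * lam)) / γN) :
    ∃ K : ℝ → ℝ,
      (∀ t ∈ Icc (0 : ℝ) T, HasDerivAt K (2 * β * K t + γN * K t ^ 2 - lam) t) ∧
      K T = c ∧
      (∀ t ∈ Icc (0 : ℝ) T, min c kplus ≤ K t ∧ K t ≤ max c kplus ∧ 0 ≤ K t) ∧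
      (∀ L : ℝ → ℝ,
        (∀ t ∈ Icc (0 : ℝ) T, HasDerivAt L (2 * β * L t + γN * L t ^ 2 - lam) t) →
        L T = c → EqOn K L (Icc (0 : ℝ) T)) := by
  have hγN : 0 < γN := by
    have : (1 : ℝ) / N ≤ 1 / 2 := one_div_le_one_div_of_le two_pos (by exact_mod_cast hN)
    rw [hγ]
    exact pow_pos (by linarith) 2
  have hlam0 : 0 ≤ lam := by linarith
  set δ := √(β ^ 2 + γN * lam)
  have hβδ : |β| ≤ δ := abs_le_sqrt (le_add_of_nonneg_right (mul_nonneg hγN.le hlam0))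
  have hkplus : 0 ≤ kplus := hk ▸ div_nonneg (by linarith [le_abs_self β]) hγN.le
  have hkminus : (-β - δ) / γN ≤ 0 :=
    div_nonpos_of_nonpos_of_nonneg (by linarith [neg_abs_le β]) hγN.le
  have hfactor (x : ℝ) : 2 * β * x + γN * x ^ 2 - lam = γN * (x - kplus) * (x - (-β - δ) / γN) :=
    hk ▸ quadratic_eq_mul_sub_mul_sub hγN.ne' (sq_sqrt (by positivity)) x
  obtain ⟨K, hKd, hKT, hKb⟩ := exists_riccati_solution (T := T) hγN.le
    (hkminus.trans hkplus) (hkminus.trans hc)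
  have hK : ∀ t ∈ Icc (0 : ℝ) T, HasDerivAt K (2 * β * K t + γN * K t ^ 2 - lam) t :=
    fun t ht ↦ hfactor (K t) ▸ hKd t ht.2
  refine ⟨K, hK, hKT, fun t ht ↦ ?_, fun L hL hLT ↦ ?_⟩
  · obtain ⟨hmin, hmax⟩ := hKb t ht.2
    exact ⟨hmin, hmax, (le_min hc hkplus).trans hmin⟩
  · have hv : ContDiff ℝ 1 (fun x : ℝ ↦ 2 * β * x + γN * x ^ 2 - lam) := by fun_prop
    exact ODE_solution_unique_of_locallyLipschitz_of_mem_Icc_left hv.locallyLipschitz hK hL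
      (hKT.trans hLT.symm)

/-- The Riccati terminal value problem `K' = 2βK + γ_N K² − λ` on `[0,T]`
with `K(T) = c` has a unique C¹ solution on all of `[0,T]`, and this solution satisfies
`min {c, k⁺} ≤ K(t) ≤ max {c, k⁺}` for all `t ∈ [0,T]`; in particular `K(t) ≥ 0`. -/
theorem riccati_existence_uniqueness_and_bounds
    (N : ℕ) (hN : 2 ≤ N) (T a q ε c : ℝ)
    (hT : 0 < T) (ha : 0 ≤ a) (hq : 0 ≤ q) (hc : 0 ≤ c) (hqε : q ^ 2 ≤ ε)
    (β γN lam kplus : ℝ)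
    (hβ : β = a + (1 - 1 / (N : ℝ)) * q)
    (hγ : γN = (1 - 1 / (N : ℝ)) ^ 2)
    (hlam : lam = ε - q ^ 2)
    (hk : kplus = (-β + Real.sqrt (β ^ 2 + γN * lam)) / γN) :
    ∃ K : ℝ → ℝ,
      (∀ t ∈ Icc (0 : ℝ) T, HasDerivAt K (2 * β * K t + γN * K t ^ 2 - lam) t) ∧
      K T = c ∧
      (∀ t ∈ Icc (0 : ℝ) T, min c kplus ≤ K t ∧ K t ≤ max c kplus ∧ 0 ≤ K t) ∧
      (∀ L : ℝ → ℝ,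
        (∀ t ∈ Icc (0 : ℝ) T, HasDerivAt L (2 * β * L t + γN * L t ^ 2 - lam) t) →
        L T = c → EqOn K L (Icc (0 : ℝ) T)) :=
  riccati_existence_uniqueness_and_bounds_general N hN T q ε c hc hqε β γN lam kplus hγ hlam hk
end

section
/- If K is a C¹ solution on [0,T] of the Riccati terminal value problem K'(t) = 2βK(t) + γ_N K(t)² − λ with K(T) = c, then for every t ∈ [0,T] one has K'(t) = (2βc + γ_N c² − λ) · exp(−∫_t^T 2(β + γ_N K(s)) ds). Consequently K' has constant sign on [0,T] (the sign of 2βc + γ_N c² − λ), K is monotone on [0,T], and max_{[0,T]} K = max{c, K(0)} and min_{[0,T]} K = min{c, K(0)}. -/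
/-!
Along a solution of an autonomous equation `K' = F(K)`, the velocity `u = F ∘ K` solves the linear
equation `u' = F'(K) u`, so `u(t) = u(T) exp(-∫_t^T F'(K))`. For the Riccati field
`F(x) = 2βx + γ_N x² - λ` this is the stated formula for `K'`. Hence `K'` has the constant sign of
`F(c)`, `K` is monotone, and its extrema over `[0,T]` are attained at the endpoints.
-/

open Set Real

theorem eq_mul_exp_neg_integral_of_hasDerivWithinAt_mul {u p : ℝ → ℝ} {a b : ℝ}
    (hp : ContinuousOn p (Icc a b))
    (hu : ∀ t ∈ Icc a b, HasDerivWithinAt u (p t * u t) (Icc a b) t) :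
    ∀ t ∈ Icc a b, u t = u b * exp (-∫ s in t..b, p s) := by
  set H : ℝ → ℝ := fun t => u t * exp (∫ s in t..b, p s)
  have hH : ∀ t ∈ Icc a b, HasDerivWithinAt H 0 (Icc a b) t := by
    intro t ht
    have : Fact (t ∈ Icc a b) := ⟨ht⟩
    have hb : b ∈ Icc a b := right_mem_Icc.2 (ht.1.trans ht.2)
    have hint : HasDerivWithinAt (fun t => ∫ s in t..b, p s) (-p t) (Icc a b) t :=
      intervalIntegral.integral_hasDerivWithinAt_left
        ((hp.mono (uIcc_subset_Icc ht hb)).intervalIntegrable)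
        (hp.stronglyMeasurableAtFilter_nhdsWithin measurableSet_Icc t) (hp t ht)
    exact ((hu t ht).mul hint.exp).congr_deriv (by ring)
  have hconst := constant_of_has_deriv_right_zero (fun t ht => (hH t ht).continuousWithinAt)
    fun t ht => (hH t (Ico_subset_Icc_self ht)).mono_of_mem_nhdsWithin (Icc_mem_nhdsGE_of_mem ht)
  intro t ht
  have hHtb : H t = H b := (hconst t ht).trans (hconst b (right_mem_Icc.2 (ht.1.trans ht.2))).symm
  simp only [H, intervalIntegral.integral_same, exp_zero, mul_one] at hHtb
  rw [← hHtb, mul_assoc, ← exp_add, add_neg_cancel, exp_zero, mul_one]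

theorem comp_eq_mul_exp_neg_integral_of_hasDerivWithinAt_comp {F F' K : ℝ → ℝ} {a b : ℝ}
    (hF : ∀ x, HasDerivAt F (F' x) x) (hF' : Continuous F')
    (hK : ∀ t ∈ Icc a b, HasDerivWithinAt K (F (K t)) (Icc a b) t) :
    ∀ t ∈ Icc a b, F (K t) = F (K b) * exp (-∫ s in t..b, F' (K s)) :=
  eq_mul_exp_neg_integral_of_hasDerivWithinAt_mul
    (hF'.comp_continuousOn fun t ht => (hK t ht).continuousWithinAt)
    fun t ht => (hF (K t)).comp_hasDerivWithinAt t (hK t ht)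

theorem hasDerivAt_riccati (β γ lam x : ℝ) :
    HasDerivAt (fun x => 2 * β * x + γ * x ^ 2 - lam) (2 * (β + γ * x)) x := by
  refine ((((hasDerivAt_id x).const_mul (2 * β)).add
    ((hasDerivAt_pow 2 x).const_mul γ)).sub_const lam).congr_deriv ?_
  ring

section

variable {f f' : ℝ → ℝ} {a b : ℝ}

theorem monotoneOn_Icc_of_hasDerivAt_nonneg (hf : ∀ x ∈ Icc a b, HasDerivAt f (f' x) x)
    (hf' : ∀ x ∈ Icc a b, 0 ≤ f' x) : MonotoneOn f (Icc a b) :=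
  monotoneOn_of_hasDerivWithinAt_nonneg (convex_Icc a b)
    (fun x hx => (hf x hx).continuousAt.continuousWithinAt)
    (fun x hx => (hf x (interior_subset hx)).hasDerivWithinAt)
    fun x hx => hf' x (interior_subset hx)

theorem antitoneOn_Icc_of_hasDerivAt_nonpos (hf : ∀ x ∈ Icc a b, HasDerivAt f (f' x) x)
    (hf' : ∀ x ∈ Icc a b, f' x ≤ 0) : AntitoneOn f (Icc a b) :=
  antitoneOn_of_hasDerivWithinAt_nonpos (convex_Icc a b)
    (fun x hx => (hf x hx).continuousAt.continuousWithinAt)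
    (fun x hx => (hf x (interior_subset hx)).hasDerivWithinAt)
    fun x hx => hf' x (interior_subset hx)

end

theorem isGreatest_max_and_isLeast_min_image_Icc {α β : Type*} [LinearOrder α]
    [LinearOrder β] {f : α → β} {a b : α} (hab : a ≤ b)
    (hf : MonotoneOn f (Icc a b) ∨ AntitoneOn f (Icc a b)) :
    IsGreatest (f '' Icc a b) (max (f b) (f a)) ∧ IsLeast (f '' Icc a b) (min (f b) (f a)) := by
  have ha := left_mem_Icc.2 hab
  have hb := right_mem_Icc.2 hab
  rcases hf with hf | hf
  · rw [max_eq_left (hf ha hb hab), min_eq_right (hf ha hb hab)]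
    exact ⟨hf.map_isGreatest (isGreatest_Icc hab), hf.map_isLeast (isLeast_Icc hab)⟩
  · rw [max_eq_right (hf ha hb hab), min_eq_left (hf ha hb hab)]
    exact ⟨hf.map_isLeast (isLeast_Icc hab), hf.map_isGreatest (isGreatest_Icc hab)⟩

theorem riccati_derivative_formula_and_monotonicity_general
    (T c : ℝ)
    (hT : 0 < T)
    (β γN lam : ℝ)
    (K K' : ℝ → ℝ)
    (hK : ∀ t ∈ Icc (0 : ℝ) T, HasDerivAt K (K' t) t)
    (hK' : ∀ t ∈ Icc (0 : ℝ) T, K' t = 2 * β * K t + γN * K t ^ 2 - lam)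
    (hKT : K T = c) :
    (∀ t ∈ Icc (0 : ℝ) T,
      K' t = (2 * β * c + γN * c ^ 2 - lam) *
        Real.exp (-(∫ s in t..T, 2 * (β + γN * K s)))) ∧
    (0 ≤ 2 * β * c + γN * c ^ 2 - lam →
      (∀ t ∈ Icc (0 : ℝ) T, 0 ≤ K' t) ∧ MonotoneOn K (Icc (0 : ℝ) T)) ∧
    (2 * β * c + γN * c ^ 2 - lam ≤ 0 →
      (∀ t ∈ Icc (0 : ℝ) T, K' t ≤ 0) ∧ AntitoneOn K (Icc (0 : ℝ) T)) ∧
    IsGreatest (K '' Icc (0 : ℝ) T) (max c (K 0)) ∧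
    IsLeast (K '' Icc (0 : ℝ) T) (min c (K 0)) := by
  set D := 2 * β * c + γN * c ^ 2 - lam
  have hformula : ∀ t ∈ Icc (0 : ℝ) T, K' t = D * exp (-(∫ s in t..T, 2 * (β + γN * K s))) := by
    intro t ht
    have hvelocity := comp_eq_mul_exp_neg_integral_of_hasDerivWithinAt_comp
      (hasDerivAt_riccati β γN lam) (by fun_prop)
      (fun s hs => hK' s hs ▸ (hK s hs).hasDerivWithinAt) t ht
    rw [hKT] at hvelocity
    rw [hK' t ht]
    exact hvelocity
  have hmono : 0 ≤ D → (∀ t ∈ Icc (0 : ℝ) T, 0 ≤ K' t) ∧ MonotoneOn K (Icc (0 : ℝ) T) :=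
    fun hD =>
    have hK'_nonneg t ht : 0 ≤ K' t := hformula t ht ▸ mul_nonneg hD (exp_pos _).le
    ⟨hK'_nonneg, monotoneOn_Icc_of_hasDerivAt_nonneg hK hK'_nonneg⟩
  have hanti : D ≤ 0 → (∀ t ∈ Icc (0 : ℝ) T, K' t ≤ 0) ∧ AntitoneOn K (Icc (0 : ℝ) T) :=
    fun hD =>
    have hK'_nonpos t ht : K' t ≤ 0 :=
      hformula t ht ▸ mul_nonpos_of_nonpos_of_nonneg hD (exp_pos _).le
    ⟨hK'_nonpos, antitoneOn_Icc_of_hasDerivAt_nonpos hK hK'_nonpos⟩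
  have hextrema := isGreatest_max_and_isLeast_min_image_Icc hT.le
    ((le_total 0 D).imp (fun hD => (hmono hD).2) fun hD => (hanti hD).2)
  rw [hKT] at hextrema
  exact ⟨hformula, hmono, hanti, hextrema⟩

/-- For any C¹ solution `K` of the Riccati terminal value problem,
`K'(t) = (2βc + γ_N c² − λ)·exp(−∫_t^T 2(β + γ_N K(s)) ds)`; consequently `K'` has the
constant sign of `2βc + γ_N c² − λ`, `K` is monotone on `[0,T]`, and
`max_{[0,T]} K = max {c, K 0}`, `min_{[0,T]} K = min {c, K 0}`. -/
theorem riccati_derivative_formula_and_monotonicity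
    (N : ℕ) (hN : 2 ≤ N) (T a q ε c : ℝ)
    (hT : 0 < T) (ha : 0 ≤ a) (hq : 0 ≤ q) (hc : 0 ≤ c) (hqε : q ^ 2 ≤ ε)
    (β γN lam : ℝ)
    (hβ : β = a + (1 - 1 / (N : ℝ)) * q)
    (hγ : γN = (1 - 1 / (N : ℝ)) ^ 2)
    (hlam : lam = ε - q ^ 2)
    (K K' : ℝ → ℝ)
    (hK : ∀ t ∈ Icc (0 : ℝ) T, HasDerivAt K (K' t) t)
    (hK' : ∀ t ∈ Icc (0 : ℝ) T, K' t = 2 * β * K t + γN * K t ^ 2 - lam)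
    (hKT : K T = c) :
    (∀ t ∈ Icc (0 : ℝ) T,
      K' t = (2 * β * c + γN * c ^ 2 - lam) *
        Real.exp (-(∫ s in t..T, 2 * (β + γN * K s)))) ∧
    (0 ≤ 2 * β * c + γN * c ^ 2 - lam →
      (∀ t ∈ Icc (0 : ℝ) T, 0 ≤ K' t) ∧ MonotoneOn K (Icc (0 : ℝ) T)) ∧
    (2 * β * c + γN * c ^ 2 - lam ≤ 0 →
      (∀ t ∈ Icc (0 : ℝ) T, K' t ≤ 0) ∧ AntitoneOn K (Icc (0 : ℝ) T)) ∧
    IsGreatest (K '' Icc (0 : ℝ) T) (max c (K 0)) ∧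
    IsLeast (K '' Icc (0 : ℝ) T) (min c (K 0)) :=
  riccati_derivative_formula_and_monotonicity_general T c hT β γN lam K K' hK hK' hKT
end

section
/- Assume β² + γ_N λ > 0 and let δ^± = −β ± √(β² + γ_N λ), so that δ⁻ − cγ_N < 0. Let K be a C¹ solution on [0,T] of the Riccati terminal value problem K'(t) = 2βK(t) + γ_N K(t)² − λ with K(T) = c. If 2βc + γ_N c² − λ > 0 (so K is increasing on [0,T]), then K(0) ≥ (−λ − cδ⁺)/(δ⁻ − cγ_N); if 2βc + γ_N c² − λ < 0 (so K is decreasing on [0,T]), then K(0) ≤ (−λ − cδ⁺)/(δ⁻ − cγ_N). -/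
/-!
The bound is the positive equilibrium `r = δ⁺ / γ_N` of the autonomous equation
`K' = f(K)`, `f(x) = 2βx + γ_N x² − λ = γ_N (x − δ⁺/γ_N)(x − δ⁻/γ_N)`. Since `f` is locally
Lipschitz, uniqueness of solutions forbids `K` from crossing `r`, so `K(0) − r` has the sign of
`K(T) − r = c − r`; as `δ⁻ < 0 ≤ c`, that is the sign of `f(c)`.
-/

open Set

section Autonomous

variable {E : Type*} [NormedAddCommGroup E] [NormedSpace ℝ E] {f : E → E} {x : ℝ → E}
  {a b : ℝ} {r : E}

theorem eqOn_equilibrium_of_hasDerivAt (hf : LocallyLipschitz f) (hr : f r = 0)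
    (hx : ∀ t ∈ Icc a b, HasDerivAt x (f (x t)) t) (hxa : x a = r) :
    EqOn x (fun _ ↦ r) (Icc a b) := by
  have hcont : ContinuousOn x (Icc a b) := fun t ht ↦ (hx t ht).continuousAt.continuousWithinAt
  set s := x '' Icc a b ∪ {r}
  obtain ⟨L, hL⟩ := hf.locallyLipschitzOn.exists_lipschitzOnWith_of_compact
    ((isCompact_Icc.image_of_continuousOn hcont).union isCompact_singleton)
  refine ODE_solution_unique_of_mem_Icc_right (v := fun _ ↦ f) (s := fun _ ↦ s)
    (fun _ _ ↦ hL) hcont (fun t ht ↦ (hx t (Ico_subset_Icc_self ht)).hasDerivWithinAt)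
    (fun t ht ↦ .inl (mem_image_of_mem x (Ico_subset_Icc_self ht))) continuousOn_const
    (fun t _ ↦ by simpa [hr] using hasDerivWithinAt_const t (Ici t) r)
    (fun _ _ ↦ .inr rfl) hxa

end Autonomous

section Barrier

variable {f : ℝ → ℝ} {x : ℝ → ℝ} {a b r : ℝ}

theorem apply_right_eq_of_apply_eq_equilibrium (hf : LocallyLipschitz f) (hr : f r = 0)
    (hx : ∀ t ∈ Icc a b, HasDerivAt x (f (x t)) t) {t₀ : ℝ} (ht₀ : t₀ ∈ Icc a b)
    (hxt₀ : x t₀ = r) : x b = r :=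
  eqOn_equilibrium_of_hasDerivAt hf hr (fun t ht ↦ hx t ⟨ht₀.1.trans ht.1, ht.2⟩) hxt₀
    ⟨ht₀.2, le_rfl⟩

theorem lt_apply_left_of_lt_apply_right (hf : LocallyLipschitz f) (hr : f r = 0) (hab : a ≤ b)
    (hx : ∀ t ∈ Icc a b, HasDerivAt x (f (x t)) t) (hxb : r < x b) : r < x a := by
  by_contra! hxa
  have hcont : ContinuousOn x (Icc a b) := fun t ht ↦ (hx t ht).continuousAt.continuousWithinAt
  obtain ⟨t₀, ht₀, hxt₀⟩ := intermediate_value_Icc hab hcont ⟨hxa, hxb.le⟩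
  exact hxb.ne' (apply_right_eq_of_apply_eq_equilibrium hf hr hx ht₀ hxt₀)

theorem apply_left_lt_of_apply_right_lt (hf : LocallyLipschitz f) (hr : f r = 0) (hab : a ≤ b)
    (hx : ∀ t ∈ Icc a b, HasDerivAt x (f (x t)) t) (hxb : x b < r) : x a < r := by
  by_contra! hxa
  have hcont : ContinuousOn x (Icc a b) := fun t ht ↦ (hx t ht).continuousAt.continuousWithinAt
  obtain ⟨t₀, ht₀, hxt₀⟩ := intermediate_value_Icc' hab hcont ⟨hxb.le, hxa⟩
  exact hxb.ne (apply_right_eq_of_apply_eq_equilibrium hf hr hx ht₀ hxt₀)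

end Barrier

section Riccati

variable {β γ lam δp δm : ℝ}

theorem mul_riccati_eq_mul (hsum : δp + δm = -(2 * β)) (hprod : δp * δm = -(γ * lam)) (x : ℝ) :
    γ * (2 * β * x + γ * x ^ 2 - lam) = (γ * x - δp) * (γ * x - δm) := by
  linear_combination γ * x * hsum - hprod

theorem riccati_root (hγ : γ ≠ 0) (hsum : δp + δm = -(2 * β)) (hprod : δp * δm = -(γ * lam)) :
    2 * β * (δp / γ) + γ * (δp / γ) ^ 2 - lam = 0 := by
  have := mul_riccati_eq_mul hsum hprod (δp / γ)
  rw [mul_div_cancel₀ _ hγ, sub_self, zero_mul] at this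
  exact (mul_eq_zero.mp this).resolve_left hγ

theorem riccati_pos_iff (hγ : 0 < γ) (hsum : δp + δm = -(2 * β)) (hprod : δp * δm = -(γ * lam))
    {x : ℝ} (hx : δm < γ * x) :
    0 < 2 * β * x + γ * x ^ 2 - lam ↔ δp / γ < x := by
  rw [div_lt_iff₀' hγ, ← mul_pos_iff_of_pos_left hγ, mul_riccati_eq_mul hsum hprod,
    mul_pos_iff_of_pos_right (sub_pos.mpr hx), sub_pos]

theorem riccati_neg_iff (hγ : 0 < γ) (hsum : δp + δm = -(2 * β)) (hprod : δp * δm = -(γ * lam))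
    {x : ℝ} (hx : δm < γ * x) :
    2 * β * x + γ * x ^ 2 - lam < 0 ↔ x < δp / γ := by
  rw [lt_div_iff₀' hγ, ← mul_lt_mul_iff_right₀ hγ, mul_zero, mul_riccati_eq_mul hsum hprod,
    ← zero_mul (γ * x - δm), mul_lt_mul_iff_left₀ (sub_pos.mpr hx), sub_neg]

end Riccati

theorem riccati_initial_value_bound_general
    (N : ℕ) (hN : 2 ≤ N) (T a q c : ℝ)
    (hT : 0 < T) (ha : 0 ≤ a) (hq : 0 ≤ q) (hc : 0 ≤ c)
    (β γN lam δplus δminus : ℝ)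
    (hβ : β = a + (1 - 1 / (N : ℝ)) * q)
    (hγ : γN = (1 - 1 / (N : ℝ)) ^ 2)
    (hR : 0 < β ^ 2 + γN * lam)
    (hδp : δplus = -β + Real.sqrt (β ^ 2 + γN * lam))
    (hδm : δminus = -β - Real.sqrt (β ^ 2 + γN * lam))
    (K : ℝ → ℝ)
    (hK : ∀ t ∈ Icc (0 : ℝ) T, HasDerivAt K (2 * β * K t + γN * K t ^ 2 - lam) t)
    (hKT : K T = c) :
    δminus - c * γN < 0 ∧
    (0 < 2 * β * c + γN * c ^ 2 - lam →
      (-lam - c * δplus) / (δminus - c * γN) ≤ K 0) ∧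
    (2 * β * c + γN * c ^ 2 - lam < 0 →
      K 0 ≤ (-lam - c * δplus) / (δminus - c * γN)) := by
  have h1N : 0 < 1 - 1 / (N : ℝ) := by
    have hNR : (2 : ℝ) ≤ N := by exact_mod_cast hN
    rw [sub_pos, div_lt_one (by linarith)]
    linarith
  have hγpos : 0 < γN := hγ ▸ pow_pos h1N 2
  have hβ0 : 0 ≤ β := hβ ▸ add_nonneg ha (mul_nonneg h1N.le hq)
  have hsum : δplus + δminus = -(2 * β) := by rw [hδp, hδm]; ring
  have hprod : δplus * δminus = -(γN * lam) := by
    rw [hδp, hδm]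
    linear_combination -Real.sq_sqrt hR.le
  have hδm_lt : δminus < γN * c := by
    rw [hδm]
    linarith [Real.sqrt_pos.mpr hR, mul_nonneg hγpos.le hc]
  have hbound : (-lam - c * δplus) / (δminus - c * γN) = δplus / γN := by
    rw [div_eq_div_iff (by linarith) hγpos.ne']
    linear_combination -hprod
  have hf : LocallyLipschitz fun x ↦ 2 * β * x + γN * x ^ 2 - lam :=
    (by fun_prop : ContDiff ℝ 1 fun x ↦ 2 * β * x + γN * x ^ 2 - lam).locallyLipschitz
  have hroot := riccati_root hγpos.ne' hsum hprod
  refine ⟨by linarith, fun hpos ↦ ?_, fun hneg ↦ ?_⟩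
  · rw [hbound]
    refine (lt_apply_left_of_lt_apply_right hf hroot hT.le hK ?_).le
    exact hKT ▸ (riccati_pos_iff hγpos hsum hprod hδm_lt).mp hpos
  · rw [hbound]
    refine (apply_left_lt_of_apply_right_lt hf hroot hT.le hK ?_).le
    exact hKT ▸ (riccati_neg_iff hγpos hsum hprod hδm_lt).mp hneg

/-- With `δ^± = −β ± √(β² + γ_N λ)` (assuming `β² + γ_N λ > 0`, so that
`δ⁻ − cγ_N < 0`), for a C¹ solution `K` of the Riccati terminal value problem:
if `2βc + γ_N c² − λ > 0` (K increasing) then `K(0) ≥ (−λ − cδ⁺)/(δ⁻ − cγ_N)`;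
if `2βc + γ_N c² − λ < 0` (K decreasing) then `K(0) ≤ (−λ − cδ⁺)/(δ⁻ − cγ_N)`. -/
theorem riccati_initial_value_bound
    (N : ℕ) (hN : 2 ≤ N) (T a q ε c : ℝ)
    (hT : 0 < T) (ha : 0 ≤ a) (hq : 0 ≤ q) (hc : 0 ≤ c) (hqε : q ^ 2 ≤ ε)
    (β γN lam δplus δminus : ℝ)
    (hβ : β = a + (1 - 1 / (N : ℝ)) * q)
    (hγ : γN = (1 - 1 / (N : ℝ)) ^ 2)
    (hlam : lam = ε - q ^ 2)
    (hR : 0 < β ^ 2 + γN * lam)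
    (hδp : δplus = -β + Real.sqrt (β ^ 2 + γN * lam))
    (hδm : δminus = -β - Real.sqrt (β ^ 2 + γN * lam))
    (K : ℝ → ℝ)
    (hK : ∀ t ∈ Icc (0 : ℝ) T, HasDerivAt K (2 * β * K t + γN * K t ^ 2 - lam) t)
    (hKT : K T = c) :
    δminus - c * γN < 0 ∧
    (0 < 2 * β * c + γN * c ^ 2 - lam →
      (-lam - c * δplus) / (δminus - c * γN) ≤ K 0) ∧
    (2 * β * c + γN * c ^ 2 - lam < 0 →
      K 0 ≤ (-lam - c * δplus) / (δminus - c * γN)) :=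
  riccati_initial_value_bound_general N hN T a q c hT ha hq hc β γN lam δplus δminus hβ hγ hR hδp
    hδm K hK hKT
end

section
/- Let T > 0, let γ : [0,T] → ℝ be measurable with γ(u) ≥ γ̲ > 0 for all u, and let h ∈ L²([0,T]). Define ψ(t) = ∫_t^T h(s) exp(−∫_t^s γ(u) du) ds for t ∈ [0,T]. Then ∫_0^T ψ(t)² dt ≤ ((1 − e^{−γ̲ T})/γ̲²) ∫_0^T h(s)² ds. -/
/-!
A Schur test. Since `γ ≥ γ̲`, the kernel `exp (-∫ₜˢ γ)` is dominated on `t < s` by the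
exponential kernel `e^{-γ̲ (s - t)}`, whose integral over `s ∈ (0, T]` is at most
`(1 - e^{-γ̲ T}) / γ̲` and whose integral over `t ∈ (0, T]` is at most `1 / γ̲`. Cauchy–Schwarz
in `s` and Tonelli then bound `∫ ψ²` by the product of these two constants times `∫ h²`. Working with
`ℝ≥0∞`-valued integrals removes every integrability side condition except the one on `h²`.
-/

open MeasureTheory Set
open scoped ENNReal

section Schur

variable {α β : Type*} [MeasurableSpace α] [MeasurableSpace β]

theorem sq_lintegral_mul_le {μ : Measure α} {g f : α → ℝ≥0∞} (hg : AEMeasurable g μ)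
    (hf : AEMeasurable f μ) :
    (∫⁻ x, g x * f x ∂μ) ^ 2 ≤ (∫⁻ x, g x ∂μ) * ∫⁻ x, g x * f x ^ 2 ∂μ := by
  have sqrt_sq : ∀ y : ℝ≥0∞, (y ^ (2⁻¹ : ℝ)) ^ 2 = y := fun y => by
    simpa using ENNReal.rpow_inv_natCast_pow two_ne_zero y
  have sq_sqrt : ∀ y : ℝ≥0∞, (y ^ 2) ^ (2⁻¹ : ℝ) = y := fun y => by
    simpa using ENNReal.pow_rpow_inv_natCast two_ne_zero y
  have holder := ENNReal.lintegral_mul_norm_pow_le (g := fun x => g x * f x ^ 2) hg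
    (hg.mul (hf.pow_const 2)) (p := 2⁻¹) (q := 2⁻¹) (by norm_num) (by norm_num) (by norm_num)
  have split : ∀ x, g x ^ (2⁻¹ : ℝ) * (g x * f x ^ 2) ^ (2⁻¹ : ℝ) = g x * f x := fun x => by
    rw [← ENNReal.mul_rpow_of_nonneg _ _ (by norm_num),
      show g x * (g x * f x ^ 2) = (g x * f x) ^ 2 by ring, sq_sqrt]
  simp only [split] at holder
  calc (∫⁻ x, g x * f x ∂μ) ^ 2
      ≤ ((∫⁻ x, g x ∂μ) ^ (2⁻¹ : ℝ) * (∫⁻ x, g x * f x ^ 2 ∂μ) ^ (2⁻¹ : ℝ)) ^ 2 := by gcongr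
    _ = (∫⁻ x, g x ∂μ) * ∫⁻ x, g x * f x ^ 2 ∂μ := by rw [mul_pow, sqrt_sq, sqrt_sq]

theorem schur_test_lintegral {μ : Measure α} {ν : Measure β} [SFinite μ] [SFinite ν]
    {K : α → β → ℝ≥0∞} (hK : Measurable (Function.uncurry K)) {f : β → ℝ≥0∞}
    (hf : Measurable f) {A B : ℝ≥0∞} (hA : ∀ᵐ t ∂μ, ∫⁻ s, K t s ∂ν ≤ A)
    (hB : ∀ᵐ s ∂ν, ∫⁻ t, K t s ∂μ ≤ B) :
    ∫⁻ t, (∫⁻ s, K t s * f s ∂ν) ^ 2 ∂μ ≤ A * B * ∫⁻ s, f s ^ 2 ∂ν := by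
  have hKf : Measurable (Function.uncurry fun t s => K t s * f s ^ 2) :=
    hK.mul ((hf.pow_const 2).comp measurable_snd)
  calc ∫⁻ t, (∫⁻ s, K t s * f s ∂ν) ^ 2 ∂μ
      ≤ ∫⁻ t, A * ∫⁻ s, K t s * f s ^ 2 ∂ν ∂μ := by
        refine lintegral_mono_ae (hA.mono fun t ht => ?_)
        calc _ ≤ _ := sq_lintegral_mul_le hK.of_uncurry_left.aemeasurable hf.aemeasurable
          _ ≤ _ := by gcongr
    _ = A * ∫⁻ s, (∫⁻ t, K t s ∂μ) * f s ^ 2 ∂ν := by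
        rw [lintegral_const_mul _ hKf.lintegral_prod_right,
          lintegral_lintegral_swap hKf.aemeasurable]
        simp_rw [lintegral_mul_const _ hK.of_uncurry_right]
    _ ≤ A * ∫⁻ s, B * f s ^ 2 ∂ν := by
        gcongr 1
        exact lintegral_mono_ae (hB.mono fun s hs => by gcongr)
    _ = A * B * ∫⁻ s, f s ^ 2 ∂ν := by rw [lintegral_const_mul _ (hf.pow_const 2), mul_assoc]

end Schur

theorem integral_exp_neg_mul (c : ℝ) (hc : c ≠ 0) (L : ℝ) :
    ∫ x in (0 : ℝ)..L, Real.exp (-(c * x)) = (1 - Real.exp (-(c * L))) / c := by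
  rw [intervalIntegral.integral_comp_mul_left (fun x => Real.exp (-x)) hc]
  simp [div_eq_inv_mul]

theorem lintegral_Ioc_exp_neg_mul_sub_left (c : ℝ) (hc : c ≠ 0) {a b : ℝ} (hab : a ≤ b) :
    ∫⁻ s in Ioc a b, ENNReal.ofReal (Real.exp (-(c * (s - a))))
      = ENNReal.ofReal ((1 - Real.exp (-(c * (b - a)))) / c) := by
  rw [← ofReal_integral_eq_lintegral_ofReal (by fun_prop : Continuous _).integrableOn_Ioc
    (ae_of_all _ fun _ => (Real.exp_pos _).le), ← intervalIntegral.integral_of_le hab,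
    intervalIntegral.integral_comp_sub_right (fun x => Real.exp (-(c * x))), sub_self,
    integral_exp_neg_mul c hc]

theorem lintegral_Ioc_exp_neg_mul_sub_right (c : ℝ) (hc : c ≠ 0) {a b : ℝ} (hab : a ≤ b) :
    ∫⁻ t in Ioc a b, ENNReal.ofReal (Real.exp (-(c * (b - t))))
      = ENNReal.ofReal ((1 - Real.exp (-(c * (b - a)))) / c) := by
  rw [← ofReal_integral_eq_lintegral_ofReal (by fun_prop : Continuous _).integrableOn_Ioc
    (ae_of_all _ fun _ => (Real.exp_pos _).le), ← intervalIntegral.integral_of_le hab,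
    intervalIntegral.integral_comp_sub_left (fun x => Real.exp (-(c * x))), sub_self,
    integral_exp_neg_mul c hc]

noncomputable def expKernel (c t s : ℝ) : ℝ≥0∞ :=
  if t < s then ENNReal.ofReal (Real.exp (-(c * (s - t)))) else 0

theorem measurable_expKernel (c : ℝ) : Measurable (Function.uncurry (expKernel c)) :=
  Measurable.ite (measurableSet_lt measurable_fst measurable_snd) (by fun_prop) measurable_const

theorem setLIntegral_Ioc_expKernel_mul (c : ℝ) {a b t : ℝ} (hat : a ≤ t) (f : ℝ → ℝ≥0∞) :
    ∫⁻ s in Ioc a b, expKernel c t s * f s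
      = ∫⁻ s in Ioc t b, ENNReal.ofReal (Real.exp (-(c * (s - t)))) * f s := by
  have : (fun s => expKernel c t s * f s)
      = (Ioi t).indicator fun s => ENNReal.ofReal (Real.exp (-(c * (s - t)))) * f s := by
    ext s
    simp [expKernel, indicator_apply, ite_mul]
  rw [this, lintegral_indicator measurableSet_Ioi, Measure.restrict_restrict measurableSet_Ioi,
    inter_comm, Ioc_inter_Ioi, sup_eq_right.2 hat]

theorem setLIntegral_Ioc_expKernel_le (c : ℝ) (hc : 0 < c) {a b t : ℝ} (ht : t ∈ Icc a b) :
    ∫⁻ s in Ioc a b, expKernel c t s ≤ ENNReal.ofReal ((1 - Real.exp (-(c * (b - a)))) / c) :=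
  calc ∫⁻ s in Ioc a b, expKernel c t s
      = ENNReal.ofReal ((1 - Real.exp (-(c * (b - t)))) / c) := by
        simpa [lintegral_Ioc_exp_neg_mul_sub_left c hc.ne' ht.2] using
          setLIntegral_Ioc_expKernel_mul c ht.1 (b := b) 1
    _ ≤ _ := by gcongr; exact ht.1

theorem setLIntegral_Ioc_expKernel_le_inv (c : ℝ) (hc : 0 < c) {a b s : ℝ} (has : a ≤ s) :
    ∫⁻ t in Ioc a b, expKernel c t s ≤ ENNReal.ofReal c⁻¹ := by
  have : (fun t => expKernel c t s)
      = (Iio s).indicator fun t => ENNReal.ofReal (Real.exp (-(c * (s - t)))) := by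
    ext t
    simp [expKernel, indicator_apply]
  calc ∫⁻ t in Ioc a b, expKernel c t s
      ≤ ∫⁻ t in Ioc a s, ENNReal.ofReal (Real.exp (-(c * (s - t)))) := by
        rw [this, lintegral_indicator measurableSet_Iio,
          Measure.restrict_restrict measurableSet_Iio]
        exact lintegral_mono_set fun t ⟨hts, hat, _⟩ => ⟨hat, hts.le⟩
    _ = ENNReal.ofReal ((1 - Real.exp (-(c * (s - a)))) / c) :=
        lintegral_Ioc_exp_neg_mul_sub_right c hc.ne' has
    _ ≤ ENNReal.ofReal c⁻¹ := by
        rw [inv_eq_one_div]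
        gcongr
        linarith [Real.exp_pos (-(c * (s - a)))]

theorem exp_neg_intervalIntegral_le {γ : ℝ → ℝ} {c t s : ℝ} (hts : t ≤ s)
    (hγ : IntegrableOn γ (Icc t s)) (hγc : ∀ u ∈ Icc t s, c ≤ γ u) :
    Real.exp (-∫ u in t..s, γ u) ≤ Real.exp (-(c * (s - t))) := by
  have := intervalIntegral.integral_mono_on hts intervalIntegrable_const
    ((intervalIntegrable_iff_integrableOn_Icc_of_le hts).2 hγ) hγc
  rw [intervalIntegral.integral_const, smul_eq_mul, mul_comm] at this
  gcongr

theorem enorm_integral_mul_exp_neg_le {γ h : ℝ → ℝ} {c t T : ℝ} (htT : t ≤ T)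
    (hγ : IntegrableOn γ (Icc t T)) (hγc : ∀ u ∈ Icc t T, c ≤ γ u) :
    ‖∫ s in t..T, h s * Real.exp (-∫ u in t..s, γ u)‖ₑ
      ≤ ∫⁻ s in Ioc t T, ENNReal.ofReal (Real.exp (-(c * (s - t)))) * ‖h s‖ₑ := by
  rw [intervalIntegral.integral_of_le htT]
  refine (enorm_integral_le_lintegral_enorm _).trans
    (setLIntegral_mono' measurableSet_Ioc fun s hs => ?_)
  rw [enorm_mul, mul_comm, Real.enorm_of_nonneg (Real.exp_pos _).le]
  exact mul_le_mul_left (ENNReal.ofReal_le_ofReal (exp_neg_intervalIntegral_le hs.1.le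
    (hγ.mono_set (Icc_subset_Icc_right hs.2)) fun u hu => hγc u ⟨hu.1, hu.2.trans hs.2⟩)) _

theorem lintegral_enorm_sq_eq_ofReal_integral_sq {α : Type*} [MeasurableSpace α] {μ : Measure α}
    {f : α → ℝ} (hf : Integrable (fun x => f x ^ 2) μ) :
    ∫⁻ x, ‖f x‖ₑ ^ 2 ∂μ = ENNReal.ofReal (∫ x, f x ^ 2 ∂μ) := by
  simpa using (ofReal_integral_norm_eq_lintegral_enorm hf).symm

theorem backward_kernel_L2_estimate_general
    (T γlo : ℝ) (hT : 0 < T) (hγlo : 0 < γlo)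
    (γ : ℝ → ℝ) (hγint : IntegrableOn γ (Icc 0 T))
    (hγge : ∀ u ∈ Icc (0 : ℝ) T, γlo ≤ γ u)
    (h : ℝ → ℝ) (hm : Measurable h)
    (hL2 : IntegrableOn (fun s => h s ^ 2) (Icc 0 T))
    (ψ : ℝ → ℝ)
    (hψ : ∀ t ∈ Icc (0 : ℝ) T,
      ψ t = ∫ s in t..T, h s * Real.exp (-(∫ u in t..s, γ u))) :
    (∫ t in (0 : ℝ)..T, ψ t ^ 2) ≤
      (1 - Real.exp (-(γlo * T))) / γlo ^ 2 * ∫ s in (0 : ℝ)..T, h s ^ 2 := by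
  set C := (1 - Real.exp (-(γlo * T))) / γlo
  have hexp : 0 ≤ 1 - Real.exp (-(γlo * T)) := by simp; positivity
  have hψ_le (t : ℝ) (ht : t ∈ Ioc 0 T) :
      ‖ψ t‖ₑ ≤ ∫⁻ s in Ioc 0 T, expKernel γlo t s * ‖h s‖ₑ := by
    rw [hψ t (Ioc_subset_Icc_self ht), setLIntegral_Ioc_expKernel_mul γlo ht.1.le]
    exact enorm_integral_mul_exp_neg_le ht.2 (hγint.mono_set (Icc_subset_Icc_left ht.1.le))
      fun u hu => hγge u ⟨ht.1.le.trans hu.1, hu.2⟩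
  have schur := schur_test_lintegral (measurable_expKernel γlo) hm.enorm
    (μ := volume.restrict (Ioc 0 T)) (ν := volume.restrict (Ioc 0 T))
    ((ae_restrict_iff' measurableSet_Ioc).2 (ae_of_all _ fun t ht =>
      by simpa using setLIntegral_Ioc_expKernel_le γlo hγlo (Ioc_subset_Icc_self ht)))
    ((ae_restrict_iff' measurableSet_Ioc).2 (ae_of_all _ fun s hs =>
      setLIntegral_Ioc_expKernel_le_inv γlo hγlo hs.1.le))
  rw [intervalIntegral.integral_of_le hT.le, intervalIntegral.integral_of_le hT.le]
  refine (ENNReal.ofReal_le_ofReal_iff (by positivity)).1 ?_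
  calc ENNReal.ofReal (∫ t in Ioc 0 T, ψ t ^ 2)
      ≤ ∫⁻ t in Ioc 0 T, ‖ψ t‖ₑ ^ 2 := by
        refine (Real.ofReal_le_enorm _).trans ((enorm_integral_le_lintegral_enorm _).trans_eq ?_)
        exact lintegral_congr fun t => enorm_pow (ψ t) 2
    _ ≤ ∫⁻ t in Ioc 0 T, (∫⁻ s in Ioc 0 T, expKernel γlo t s * ‖h s‖ₑ) ^ 2 :=
        setLIntegral_mono' measurableSet_Ioc fun t ht => by gcongr; exact hψ_le t ht
    _ ≤ ENNReal.ofReal C * ENNReal.ofReal γlo⁻¹ * ∫⁻ s in Ioc 0 T, ‖h s‖ₑ ^ 2 := schur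
    _ = _ := by
        rw [lintegral_enorm_sq_eq_ofReal_integral_sq (hL2.mono_set Ioc_subset_Icc_self),
          ← ENNReal.ofReal_mul (by positivity), ← ENNReal.ofReal_mul (by positivity)]
        congr 2
        ring

/-- Backward kernel estimate. For `T > 0`, a measurable (integrable) `γ`
bounded below by `γ̲ > 0` on `[0,T]`, and `h ∈ L²([0,T])`, the function
`ψ(t) = ∫_t^T h(s) exp(−∫_t^s γ(u) du) ds` satisfies
`∫_0^T ψ(t)² dt ≤ ((1 − e^{−γ̲T})/γ̲²) ∫_0^T h(s)² ds`. -/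
theorem backward_kernel_L2_estimate
    (T γlo : ℝ) (hT : 0 < T) (hγlo : 0 < γlo)
    (γ : ℝ → ℝ) (hγm : Measurable γ) (hγint : IntegrableOn γ (Icc 0 T))
    (hγge : ∀ u ∈ Icc (0 : ℝ) T, γlo ≤ γ u)
    (h : ℝ → ℝ) (hm : Measurable h)
    (hL2 : IntegrableOn (fun s => h s ^ 2) (Icc 0 T))
    (ψ : ℝ → ℝ)
    (hψ : ∀ t ∈ Icc (0 : ℝ) T,
      ψ t = ∫ s in t..T, h s * Real.exp (-(∫ u in t..s, γ u))) :
    (∫ t in (0 : ℝ)..T, ψ t ^ 2) ≤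
      (1 - Real.exp (-(γlo * T))) / γlo ^ 2 * ∫ s in (0 : ℝ)..T, h s ^ 2 :=
  backward_kernel_L2_estimate_general T γlo hT hγlo γ hγint hγge h hm hL2 ψ hψ
end

section
/- (Proposition 3.2, case (i): small time horizon.) Fix an integer N ≥ 2 and parameters a, q, ε, c with a ≥ 0, q ≥ 0, c ≥ 0, q² ≤ ε and β := a + (1 − 1/N)q > 0. For each T > 0 let K_T denote the unique C¹ solution on [0,T] of K'(t) = 2βK(t) + γ_N K(t)² − λ with K(T) = c, and form the corresponding quantities K̄, K̲, γ̲ and C. Then there exists T₀ > 0 such that for every T ∈ (0, T₀) the convergence condition ((1 − e^{−2Tγ̲})/γ̲) · C < 1 holds. -/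
open Set


lemma phi_nonneg_aux (T γ : ℝ) (hT : 0 ≤ T) :
    0 ≤ (1 - Real.exp (-(2*T*γ)))/γ := by
  rcases lt_trichotomy γ 0 with h|h|h
  · apply div_nonneg_iff.mpr
    refine Or.inr ⟨?_, h.le⟩
    have : (1:ℝ) ≤ Real.exp (-(2*T*γ)) := Real.one_le_exp (by nlinarith)
    linarith
  · simp [h]
  · apply div_nonneg _ h.le
    have : Real.exp (-(2*T*γ)) ≤ 1 := Real.exp_le_one_iff.mpr (by nlinarith)
    linarith

lemma phi_le_aux (T γ G : ℝ) (hT : 0 ≤ T) (hG1 : γ ≤ G) (hG2 : -γ ≤ G) :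
    (1 - Real.exp (-(2*T*γ)))/γ ≤ 2*T*Real.exp (2*T*G) := by
  rcases lt_trichotomy γ 0 with h|h|h
  · rw [div_le_iff_of_neg h]
    have hy : 0 ≤ -(2*T*γ) := by nlinarith
    have h1 : -(-(2*T*γ)) + 1 ≤ Real.exp (-(-(2*T*γ))) := Real.add_one_le_exp _
    have h2 : Real.exp (-(-(2*T*γ))) * Real.exp (-(2*T*γ)) = 1 := by
      rw [← Real.exp_add]; simp
    have h3 : Real.exp (-(2*T*γ)) - 1 ≤ -(2*T*γ) * Real.exp (-(2*T*γ)) := by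
      nlinarith [Real.exp_pos (-(2*T*γ))]
    have h4 : Real.exp (-(2*T*γ)) ≤ Real.exp (2*T*G) := by
      apply Real.exp_le_exp.mpr; nlinarith
    nlinarith [Real.exp_pos (-(2*T*γ)), Real.exp_pos (2*T*G)]
  · simp [h]
    positivity
  · rw [div_le_iff₀ h]
    have h1 : -(2*T*γ) + 1 ≤ Real.exp (-(2*T*γ)) := Real.add_one_le_exp _
    have h2 : (1:ℝ) ≤ Real.exp (2*T*G) := Real.one_le_exp (by nlinarith)
    have h3 : (0:ℝ) ≤ 2*T*γ := by positivity
    nlinarith [mul_le_mul_of_nonneg_left h2 h3]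


lemma bootstrap_aux (T M c : ℝ) (hT : 0 < T) (hM : 0 ≤ M) (hMT : M * T ≤ 1/2)
    (K : ℝ → ℝ) (F : ℝ → ℝ)
    (hK : ∀ t ∈ Icc (0:ℝ) T, HasDerivAt K (F (K t)) t)
    (hKT : K T = c)
    (hF : ∀ y : ℝ, |y - c| ≤ 1 → |F y| ≤ M) :
    ∀ s ∈ Icc (0:ℝ) T, |K s - c| ≤ 1/2 := by
  -- mean value step
  have mvt : ∀ t₁ ∈ Icc (0:ℝ) T, (∀ s ∈ Icc t₁ T, |K s - c| ≤ 1) →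
      ∀ s ∈ Icc t₁ T, |K s - c| ≤ 1/2 := by
    intro t₁ ht₁ H s hs
    have hTm : T ∈ Icc t₁ T := ⟨ht₁.2, le_refl T⟩
    have key : ‖K s - K T‖ ≤ M * ‖s - T‖ := by
      apply Convex.norm_image_sub_le_of_norm_hasDerivWithin_le
        (f' := fun x => F (K x))
        (fun x hx => ((hK x ⟨le_trans ht₁.1 hx.1, hx.2⟩).hasDerivWithinAt))
        (fun x hx => hF (K x) (H x hx)) (convex_Icc t₁ T) hTm hs
    rw [hKT] at key
    have h1 : |K s - c| ≤ M * (T - s) := by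
      rw [Real.norm_eq_abs] at key
      have : ‖s - T‖ = T - s := by
        rw [Real.norm_eq_abs, abs_sub_comm, abs_of_nonneg (by linarith [hs.2])]
      rw [this] at key; exact key
    have h2 : M * (T - s) ≤ M * T := by
      apply mul_le_mul_of_nonneg_left _ hM
      linarith [hs.1, ht₁.1]
    linarith
  set A : Set ℝ := {t | t ∈ Icc (0:ℝ) T ∧ ∀ s ∈ Icc t T, |K s - c| ≤ 1} with hA
  have hTA : T ∈ A := by
    refine ⟨⟨hT.le, le_refl T⟩, ?_⟩
    intro s hs
    have : s = T := le_antisymm hs.2 hs.1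
    rw [this, hKT]; simp
  have hAne : A.Nonempty := ⟨T, hTA⟩
  have hAbd : BddBelow A := ⟨0, fun t ht => ht.1.1⟩
  set t₀ := sInf A with ht₀def
  have ht₀0 : 0 ≤ t₀ := le_csInf hAne (fun t ht => ht.1.1)
  have ht₀T : t₀ ≤ T := csInf_le hAbd hTA
  have hIoc : ∀ s ∈ Ioc t₀ T, |K s - c| ≤ 1 := by
    intro s hs
    obtain ⟨t, htA, htlt⟩ := exists_lt_of_csInf_lt hAne hs.1
    exact htA.2 s ⟨htlt.le, hs.2⟩
  have ht₀1 : |K t₀ - c| ≤ 1 := by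
    rcases eq_or_lt_of_le ht₀T with h|h
    · rw [h, hKT]; simp
    · have hcont : ContinuousAt (fun s => |K s - c|) t₀ :=
        (((hK t₀ ⟨ht₀0, ht₀T⟩).continuousAt).sub continuousAt_const).abs
      refine le_of_tendsto (hcont.tendsto.mono_left (nhdsWithin_le_nhds (s := Ioi t₀))) ?_
      filter_upwards [Ioc_mem_nhdsGT_of_mem ⟨le_refl t₀, h⟩] with s hs
      exact hIoc s hs
  have hIcc1 : ∀ s ∈ Icc t₀ T, |K s - c| ≤ 1 := by
    intro s hs
    rcases eq_or_lt_of_le hs.1 with h|h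
    · rw [← h]; exact ht₀1
    · exact hIoc s ⟨h, hs.2⟩
  have hHalf : ∀ s ∈ Icc t₀ T, |K s - c| ≤ 1/2 := mvt t₀ ⟨ht₀0, ht₀T⟩ hIcc1
  have ht₀eq : t₀ = 0 := by
    by_contra hne
    have ht₀pos : 0 < t₀ := lt_of_le_of_ne ht₀0 (Ne.symm hne)
    have hcK : ContinuousAt K t₀ := (hK t₀ ⟨ht₀0, ht₀T⟩).continuousAt
    obtain ⟨δ, hδ0, hδ⟩ := Metric.continuousAt_iff.mp hcK (1/2) (by norm_num)
    set t' := max 0 (t₀ - δ/2) with ht'def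
    have ht'lt : t' < t₀ := by
      apply max_lt ht₀pos; linarith
    have ht'A : t' ∈ A := by
      refine ⟨⟨le_max_left _ _, le_trans ht'lt.le ht₀T⟩, ?_⟩
      intro s hs
      rcases le_or_gt t₀ s with h|h
      · exact hIcc1 s ⟨h, hs.2⟩
      · have hs1 : t₀ - δ/2 ≤ s := le_trans (le_max_right _ _) hs.1
        have hdist : dist s t₀ < δ := by
          rw [Real.dist_eq, abs_of_nonpos (by linarith)]
          linarith
        have h1 : dist (K s) (K t₀) < 1/2 := hδ hdist
        rw [Real.dist_eq] at h1
        have h2 : |K t₀ - c| ≤ 1/2 := hHalf t₀ ⟨le_refl t₀, ht₀T⟩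
        calc |K s - c| = |(K s - K t₀) + (K t₀ - c)| := by ring_nf
          _ ≤ |K s - K t₀| + |K t₀ - c| := abs_add_le _ _
          _ ≤ 1 := by linarith
    have : t₀ ≤ t' := csInf_le hAbd ht'A
    linarith
  intro s hs
  exact hHalf s ⟨by rw [ht₀eq]; exact hs.1, hs.2⟩

set_option maxHeartbeats 1000000 in
/-- Proposition 3.2, case (i): small time horizon. With `β > 0` fixed,
there is `T₀ > 0` such that for every `T ∈ (0, T₀)`, the C¹ solution `K` on `[0,T]` of
the Riccati terminal value problem satisfies the convergence condition
`((1 − e^{−2Tγ̲})/γ̲) · C < 1`, where `K̄ = max K`, `K̲ = min K` on `[0,T]`,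
`γ̲ = a + (1 − 1/N)q + (1 − 1/N)²K̲` and
`C = (1 − 1/N)²[(1 − 1/N)²K̄² + (q + (1 − 1/N)K̄)²(((1 − e^{−2Tγ̲})/γ̲)(1 − 1/N)⁴K̄² + 2)]`. -/
theorem convergence_condition_small_time
    (N : ℕ) (hN : 2 ≤ N) (a q ε c : ℝ)
    (ha : 0 ≤ a) (hq : 0 ≤ q) (hc : 0 ≤ c) (hqε : q ^ 2 ≤ ε)
    (hβpos : 0 < a + (1 - 1 / (N : ℝ)) * q) :
    ∃ T₀ > (0 : ℝ), ∀ T : ℝ, 0 < T → T < T₀ → ∀ K : ℝ → ℝ,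
      (∀ t ∈ Icc (0 : ℝ) T, HasDerivAt K
        (2 * (a + (1 - 1 / (N : ℝ)) * q) * K t
          + (1 - 1 / (N : ℝ)) ^ 2 * K t ^ 2 - (ε - q ^ 2)) t) →
      K T = c →
      (let Kbar := sSup (K '' Icc (0 : ℝ) T);
       let Kmin := sInf (K '' Icc (0 : ℝ) T);
       let glo := a + (1 - 1 / (N : ℝ)) * q + (1 - 1 / (N : ℝ)) ^ 2 * Kmin;
       let C := (1 - 1 / (N : ℝ)) ^ 2 *
         ((1 - 1 / (N : ℝ)) ^ 2 * Kbar ^ 2 +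
          (q + (1 - 1 / (N : ℝ)) * Kbar) ^ 2 *
            ((1 - Real.exp (-(2 * T * glo))) / glo * (1 - 1 / (N : ℝ)) ^ 4 * Kbar ^ 2 + 2));
       (1 - Real.exp (-(2 * T * glo))) / glo * C < 1) := by
  have hN2 : (2:ℝ) ≤ (N:ℝ) := by exact_mod_cast hN
  have hNpos : (0:ℝ) < (N:ℝ) := by linarith
  set r : ℝ := 1 - 1 / (N : ℝ) with hrdef
  have hr0 : 0 ≤ r := by
    have : 1 / (N:ℝ) ≤ 1/2 := by
      apply div_le_div_of_nonneg_left <;> linarith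
    simp only [hrdef]; linarith
  have hr1 : r ≤ 1 := by
    have : 0 < 1 / (N:ℝ) := by positivity
    simp only [hrdef]; linarith
  have hr2 : r^2 ≤ 1 := by nlinarith
  set β : ℝ := a + r * q with hβdef
  set lam : ℝ := ε - q^2 with hlamdef
  have hlam : 0 ≤ lam := by simp only [hlamdef]; linarith
  set M : ℝ := 2*β*(c+1) + (c+1)^2 + lam with hMdef
  have hM0 : 0 ≤ M := by
    have : 0 ≤ 2*β*(c+1) := by positivity
    have h2 : 0 ≤ (c+1)^2 := by positivity
    simp only [hMdef]; linarith
  set G : ℝ := β + c + 1 with hGdef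
  have hG0 : 0 < G := by simp only [hGdef]; linarith
  set E : ℝ := Real.exp (2*G) with hEdef
  have hE1 : 1 ≤ E := by
    simp only [hEdef]; exact Real.one_le_exp (by linarith)
  set D : ℝ := (c+1)^2 + (q+c+1)^2 * (2*E*(c+1)^2 + 2) with hDdef
  have hD0 : 0 < D := by
    have h1 : 0 < (c+1)^2 := by positivity
    have h2 : 0 ≤ (q+c+1)^2 * (2*E*(c+1)^2 + 2) := by positivity
    simp only [hDdef]; linarith
  have hMden : (0:ℝ) < 2*(M+1) := by linarith
  have hDden : (0:ℝ) < 2*E*D + 1 := by nlinarith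
  clear_value D E G M lam β r
  refine ⟨min 1 (min (1/(2*(M+1))) (1/(2*E*D + 1))), ?_, ?_⟩
  · apply lt_min one_pos
    apply lt_min <;> positivity
  intro T hTpos hTlt K hK hKT
  have hT1 : T ≤ 1 := le_of_lt (lt_of_lt_of_le hTlt (min_le_left _ _))
  have hTM : T < 1/(2*(M+1)) :=
    lt_of_lt_of_le hTlt (le_trans (min_le_right _ _) (min_le_left _ _))
  have hTD : T < 1/(2*E*D + 1) :=
    lt_of_lt_of_le hTlt (le_trans (min_le_right _ _) (min_le_right _ _))
  -- a priori bound on K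
  have hMT : M * T ≤ 1/2 := by
    have h1 : T * (2*(M+1)) < 1 := (lt_div_iff₀ hMden).mp hTM
    nlinarith [mul_nonneg hM0 hTpos.le]
  have hF : ∀ y : ℝ, |y - c| ≤ 1 → |2*β*y + r^2*y^2 - lam| ≤ M := by
    intro y hy
    rw [abs_le] at hy ⊢
    have hy2 : y^2 ≤ (c+1)^2 := by nlinarith [hy.1, hy.2]
    have hry : r^2*y^2 ≤ (c+1)^2 := by
      nlinarith [mul_nonneg (by linarith : (0:ℝ) ≤ 1 - r^2) (sq_nonneg y)]
    have h0 : 0 ≤ r^2*y^2 := by positivity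
    have hb1 : -(2*β*(c+1)) ≤ 2*β*y := by nlinarith [hy.1]
    have hb2 : 2*β*y ≤ 2*β*(c+1) := by nlinarith [hy.2]
    rw [hMdef]
    constructor <;> nlinarith [sq_nonneg (c+1)]
  have hK' : ∀ t ∈ Icc (0:ℝ) T, HasDerivAt K ((fun y => 2*β*y + r^2*y^2 - lam) (K t)) t :=
    fun t ht => hK t ht
  have hbd : ∀ s ∈ Icc (0:ℝ) T, |K s - c| ≤ 1/2 :=
    bootstrap_aux T M c hTpos hM0 hMT K (fun y => 2*β*y + r^2*y^2 - lam) hK' hKT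
      (fun y hy => hF y hy)
  -- bounds on sSup and sInf
  have hne : (K '' Icc (0:ℝ) T).Nonempty := ⟨K T, ⟨T, ⟨hTpos.le, le_refl T⟩, rfl⟩⟩
  have himg : ∀ y ∈ K '' Icc (0:ℝ) T, c - 1 ≤ y ∧ y ≤ c + 1 := by
    rintro y ⟨s, hs, rfl⟩
    have := hbd s hs
    rw [abs_le] at this
    constructor <;> linarith [this.1, this.2]
  have hbdd : BddAbove (K '' Icc (0:ℝ) T) := ⟨c+1, fun y hy => (himg y hy).2⟩
  have hbddb : BddBelow (K '' Icc (0:ℝ) T) := ⟨c-1, fun y hy => (himg y hy).1⟩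
  have hmem : K T ∈ K '' Icc (0:ℝ) T := ⟨T, ⟨hTpos.le, le_refl T⟩, rfl⟩
  rw [hKT] at hmem
  intro Kbar Kmin glo C
  have hKbardef : Kbar = sSup (K '' Icc (0:ℝ) T) := rfl
  have hKmindef : Kmin = sInf (K '' Icc (0:ℝ) T) := rfl
  have hglodef : glo = β + r^2 * Kmin := rfl
  have hCdef : C = r ^ 2 * (r ^ 2 * Kbar ^ 2 + (q + r * Kbar) ^ 2 *
      ((1 - Real.exp (-(2 * T * glo))) / glo * r ^ 4 * Kbar ^ 2 + 2)) := rfl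
  clear_value Kbar Kmin glo C
  have hKbar1 : Kbar ≤ c + 1 := by
    rw [hKbardef]; exact csSup_le hne (fun y hy => (himg y hy).2)
  have hKbar0 : c ≤ Kbar := by rw [hKbardef]; exact le_csSup hbdd hmem
  have hKmin1 : c - 1 ≤ Kmin := by
    rw [hKmindef]; exact le_csInf hne (fun y hy => (himg y hy).1)
  have hKmin0 : Kmin ≤ c := by rw [hKmindef]; exact csInf_le hbddb hmem
  -- bounds on glo
  have hglo_le : glo ≤ G := by
    rw [hglodef, hGdef]
    linarith [mul_nonneg (sq_nonneg r) (by linarith : (0:ℝ) ≤ c - Kmin),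
      mul_nonneg (by linarith : (0:ℝ) ≤ 1 - r^2) hc]
  have hglo_ge : -glo ≤ G := by
    rw [hglodef, hGdef]
    linarith [mul_nonneg (sq_nonneg r) (by linarith : (0:ℝ) ≤ Kmin + 1)]
  -- the phi factor
  have hφ0 : 0 ≤ (1 - Real.exp (-(2 * T * glo))) / glo := phi_nonneg_aux T glo hTpos.le
  have hφle : (1 - Real.exp (-(2 * T * glo))) / glo ≤ 2*T*Real.exp (2*T*G) :=
    phi_le_aux T glo G hTpos.le hglo_le hglo_ge
  have hexp : Real.exp (2*T*G) ≤ E := by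
    rw [hEdef]
    apply Real.exp_le_exp.mpr
    linarith [mul_nonneg (by linarith : (0:ℝ) ≤ 1 - T) hG0.le]
  have hφle2 : (1 - Real.exp (-(2 * T * glo))) / glo ≤ 2*T*E := by
    have h1 : 2*T*Real.exp (2*T*G) ≤ 2*T*E :=
      mul_le_mul_of_nonneg_left hexp (by linarith)
    linarith
  have hφΦ : (1 - Real.exp (-(2 * T * glo))) / glo ≤ 2*E := by
    linarith [hφle2, mul_nonneg (by linarith : (0:ℝ) ≤ 1 - T) (by linarith : (0:ℝ) ≤ E)]
  set φ : ℝ := (1 - Real.exp (-(2 * T * glo))) / glo with hφdef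
  clear_value φ
  -- bound C by D
  have hKb2 : Kbar^2 ≤ (c+1)^2 := by
    linarith [mul_nonneg (by linarith : (0:ℝ) ≤ c + 1 - Kbar) (by linarith : (0:ℝ) ≤ c + 1 + Kbar)]
  have hA1 : r^2 * Kbar^2 ≤ (c+1)^2 := by
    linarith [mul_nonneg (by linarith : (0:ℝ) ≤ 1 - r^2) (sq_nonneg Kbar)]
  have hA2 : (q + r * Kbar)^2 ≤ (q+c+1)^2 := by
    have h1 : 0 ≤ q + r * Kbar := by
      have := mul_nonneg hr0 (hc.trans hKbar0); linarith
    have h2 : q + r * Kbar ≤ q + c + 1 := by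
      linarith [mul_nonneg (by linarith : (0:ℝ) ≤ 1 - r) (by linarith : (0:ℝ) ≤ Kbar)]
    exact pow_le_pow_left₀ h1 h2 2
  have hr4 : r^4 ≤ 1 := by
    linarith [mul_nonneg (sq_nonneg r) (by linarith : (0:ℝ) ≤ 1 - r^2)]
  have hr40 : (0:ℝ) ≤ r^4 := by positivity
  have hA3 : φ * r^4 * Kbar^2 + 2 ≤ 2*E*(c+1)^2 + 2 := by
    have h1 : φ * r^4 * Kbar^2 ≤ φ * Kbar^2 := by
      linarith [mul_nonneg (mul_nonneg hφ0 (by linarith : (0:ℝ) ≤ 1 - r^4)) (sq_nonneg Kbar)]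
    have h2 : φ * Kbar^2 ≤ 2*E*Kbar^2 := by
      linarith [mul_nonneg (by linarith : (0:ℝ) ≤ 2*E - φ) (sq_nonneg Kbar)]
    have h3 : 2*E*Kbar^2 ≤ 2*E*(c+1)^2 :=
      mul_le_mul_of_nonneg_left hKb2 (by linarith)
    linarith
  have hA3' : 0 ≤ φ * r^4 * Kbar^2 + 2 := by
    have := mul_nonneg (mul_nonneg hφ0 hr40) (sq_nonneg Kbar)
    linarith
  have hA4 : (q + r * Kbar)^2 * (φ * r^4 * Kbar^2 + 2) ≤ (q+c+1)^2 * (2*E*(c+1)^2 + 2) :=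
    mul_le_mul hA2 hA3 hA3' (by positivity)
  have hX0 : 0 ≤ r ^ 2 * Kbar ^ 2 + (q + r * Kbar) ^ 2 * (φ * r ^ 4 * Kbar ^ 2 + 2) := by
    have h1 : 0 ≤ r^2 * Kbar^2 := by positivity
    have h2 : 0 ≤ (q + r * Kbar)^2 * (φ * r^4 * Kbar^2 + 2) :=
      mul_nonneg (sq_nonneg _) hA3'
    linarith
  have hCD : C ≤ D := by
    rw [hCdef, hDdef]
    calc r ^ 2 * (r ^ 2 * Kbar ^ 2 + (q + r * Kbar) ^ 2 * (φ * r ^ 4 * Kbar ^ 2 + 2))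
        ≤ 1 * (r ^ 2 * Kbar ^ 2 + (q + r * Kbar) ^ 2 * (φ * r ^ 4 * Kbar ^ 2 + 2)) :=
          mul_le_mul_of_nonneg_right hr2 hX0
      _ = r ^ 2 * Kbar ^ 2 + (q + r * Kbar) ^ 2 * (φ * r ^ 4 * Kbar ^ 2 + 2) := one_mul _
      _ ≤ (c+1)^2 + (q+c+1)^2 * (2*E*(c+1)^2 + 2) := by linarith
  -- final chain
  show φ * C < 1
  have hC0 : 0 ≤ C := by
    rw [hCdef]; exact mul_nonneg (sq_nonneg r) hX0
  have h1 : φ * C ≤ φ * D := mul_le_mul_of_nonneg_left hCD hφ0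
  have h2 : φ * D ≤ (2*T*E) * D := mul_le_mul_of_nonneg_right hφle2 hD0.le
  have h3 : (2*T*E) * D < 1 := by
    have h4 : T * (2*E*D + 1) < 1 := (lt_div_iff₀ hDden).mp hTD
    have h5 : T * (2*E*D + 1) = (2*T*E)*D + T := by ring
    linarith
  linarith
end

section
/- (Proposition 3.2, case (ii): strong mean reversion.) Fix an integer N ≥ 2, a time horizon T > 0, and parameters q, ε, c with q ≥ 0, c ≥ 0 and q² ≤ ε. For each a > 0 let K_a denote the unique C¹ solution on [0,T] of K'(t) = 2βK(t) + γ_N K(t)² − λ with K(T) = c, where β = a + (1 − 1/N)q, and form the corresponding quantities K̄, K̲, γ̲ and C. Then there exists a₀ > 0 such that for every a > a₀ the convergence condition ((1 − e^{−2Tγ̲})/γ̲) · C < 1 holds. -/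
/-!
The comparison principle for the backward Riccati equation traps `K` between the constant
sub-solution `0` and the constant super-solution `M = max c (λ/2)` as soon as `β ≥ 1`. Hence `C`
stays below a constant `C₀` independent of `a`, while `(1 − e^{−2Tγ̲})/γ̲ ≤ 1/γ̲ ≤ 1/a`; so the
condition holds for `a > max 1 C₀`.
-/

open Set Real intervalIntegral

theorem hasDerivAt_integral_of_continuousOn_Icc {g : ℝ → ℝ} {a b t : ℝ}
    (hg : ContinuousOn g (Icc a b)) (ht : t ∈ Ioo a b) :
    HasDerivAt (fun u ↦ ∫ s in a..u, g s) (g t) t :=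
  integral_hasDerivAt_right
    ((hg.mono (Icc_subset_Icc_right ht.2.le)).intervalIntegrable_of_Icc ht.1.le)
    ((hg.mono Ioo_subset_Icc_self).stronglyMeasurableAtFilter isOpen_Ioo t ht)
    (hg.continuousAt (Icc_mem_nhds ht.1 ht.2))

theorem nonpos_of_mul_le_deriv_of_nonpos_right {g h h' : ℝ → ℝ} {a b : ℝ}
    (hg : ContinuousOn g (Icc a b)) (hh : ∀ t ∈ Icc a b, HasDerivAt h (h' t) t)
    (hgh : ∀ t ∈ Icc a b, g t * h t ≤ h' t) (hb : h b ≤ 0) :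
    ∀ t ∈ Icc a b, h t ≤ 0 := by
  intro t ht
  have hab : a ≤ b := ht.1.trans ht.2
  set G : ℝ → ℝ := fun u ↦ ∫ s in a..u, g s
  -- `exp (-G)` is an integrating factor: `(h · exp (-G))' = (h' - g h) · exp (-G) ≥ 0`.
  have hmono : MonotoneOn (fun u ↦ h u * exp (-G u)) (Icc a b) := by
    have hG : ContinuousOn G (Icc a b) := by
      simpa only [uIcc_of_le hab] using
        continuousOn_primitive_interval' (hg.intervalIntegrable_of_Icc hab) left_mem_uIcc
    have hh_cont : ContinuousOn h (Icc a b) :=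
      fun u hu ↦ (hh u hu).continuousAt.continuousWithinAt
    refine monotoneOn_of_hasDerivWithinAt_nonneg (convex_Icc a b) (hh_cont.mul hG.neg.rexp)
      (f' := fun u ↦ (h' u - g u * h u) * exp (-G u)) (fun u hu ↦ ?_) (fun u hu ↦ ?_)
    · rw [interior_Icc] at hu
      have hGu := hasDerivAt_integral_of_continuousOn_Icc hg hu
      refine (((hh u (Ioo_subset_Icc_self hu)).mul hGu.neg.exp).congr_deriv ?_).hasDerivWithinAt
      simp only [Pi.neg_apply]
      ring
    · rw [interior_Icc] at hu
      exact mul_nonneg (sub_nonneg.2 (hgh u (Ioo_subset_Icc_self hu))) (exp_pos _).le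
  have hF : h t * exp (-G t) ≤ h b * exp (-G b) := hmono ht ⟨hab, le_rfl⟩ ht.2
  have : h t * exp (-G t) ≤ 0 := hF.trans (mul_nonpos_of_nonpos_of_nonneg hb (exp_pos _).le)
  exact nonpos_of_mul_nonpos_left this (exp_pos _)

section Riccati

variable {β γ ℓ t₀ T : ℝ} {K : ℝ → ℝ}

theorem le_of_riccati_subsolution {m : ℝ}
    (hK : ∀ t ∈ Icc t₀ T, HasDerivAt K (2 * β * K t + γ * K t ^ 2 - ℓ) t)
    (hm : 2 * β * m + γ * m ^ 2 ≤ ℓ) (hmT : m ≤ K T) : ∀ t ∈ Icc t₀ T, m ≤ K t := by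
  have hcont : ContinuousOn K (Icc t₀ T) := fun t ht ↦ (hK t ht).continuousAt.continuousWithinAt
  have hg : ContinuousOn (fun t ↦ 2 * β + γ * (K t + m)) (Icc t₀ T) := by fun_prop
  intro t ht
  refine sub_nonpos.1 (nonpos_of_mul_le_deriv_of_nonpos_right hg
    (fun s hs ↦ (hK s hs).const_sub m) (fun s hs ↦ ?_) (sub_nonpos.2 hmT) t ht)
  linear_combination hm

theorem le_of_riccati_supersolution {M : ℝ}
    (hK : ∀ t ∈ Icc t₀ T, HasDerivAt K (2 * β * K t + γ * K t ^ 2 - ℓ) t)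
    (hM : ℓ ≤ 2 * β * M + γ * M ^ 2) (hMT : K T ≤ M) : ∀ t ∈ Icc t₀ T, K t ≤ M := by
  have hcont : ContinuousOn K (Icc t₀ T) := fun t ht ↦ (hK t ht).continuousAt.continuousWithinAt
  have hg : ContinuousOn (fun t ↦ 2 * β + γ * (K t + M)) (Icc t₀ T) := by fun_prop
  intro t ht
  refine sub_nonpos.1 (nonpos_of_mul_le_deriv_of_nonpos_right hg
    (fun s hs ↦ (hK s hs).sub_const M) (fun s hs ↦ ?_) (sub_nonpos.2 hMT) t ht)
  linear_combination hM

end Riccati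

theorem one_sub_one_div_natCast_mem_Icc (N : ℕ) : 1 - 1 / (N : ℝ) ∈ Icc (0 : ℝ) 1 := by
  rw [one_div]
  exact ⟨sub_nonneg.2 (Nat.cast_inv_le_one N), sub_le_self _ (by positivity)⟩

theorem one_sub_exp_neg_div_mem_Icc {x γ : ℝ} (hx : 0 ≤ x) (hγ : 0 < γ) :
    (1 - exp (-x)) / γ ∈ Icc 0 γ⁻¹ := by
  have h1 : exp (-x) ≤ 1 := exp_le_one_iff.2 (neg_nonpos.2 hx)
  refine ⟨div_nonneg (sub_nonneg.2 h1) hγ.le, ?_⟩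
  rw [div_eq_mul_inv]
  exact mul_le_of_le_one_left (inv_nonneg.2 hγ.le) (sub_le_self _ (exp_pos _).le)

theorem convergence_constant_le {ν q E k M : ℝ} (hν : ν ∈ Icc 0 1) (hq : 0 ≤ q)
    (hE : E ∈ Icc 0 1) (hk : k ∈ Icc 0 M) :
    ν ^ 2 * (ν ^ 2 * k ^ 2 + (q + ν * k) ^ 2 * (E * ν ^ 4 * k ^ 2 + 2))
      ≤ M ^ 2 + (q + M) ^ 2 * (M ^ 2 + 2) := by
  obtain ⟨hν0, hν1⟩ := hν
  obtain ⟨hE0, hE1⟩ := hE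
  obtain ⟨hk0, hkM⟩ := hk
  calc ν ^ 2 * (ν ^ 2 * k ^ 2 + (q + ν * k) ^ 2 * (E * ν ^ 4 * k ^ 2 + 2))
      ≤ 1 ^ 2 * (1 ^ 2 * M ^ 2 + (q + 1 * M) ^ 2 * (1 * 1 ^ 4 * M ^ 2 + 2)) := by gcongr
    _ = M ^ 2 + (q + M) ^ 2 * (M ^ 2 + 2) := by ring

theorem convergence_condition_strong_mean_reversion_general
    (N : ℕ) (T q ε c : ℝ)
    (hT : 0 < T) (hq : 0 ≤ q) (hc : 0 ≤ c) (hqε : q ^ 2 ≤ ε) :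
    ∃ a₀ > (0 : ℝ), ∀ a : ℝ, a₀ < a → ∀ K : ℝ → ℝ,
      (∀ t ∈ Icc (0 : ℝ) T, HasDerivAt K
        (2 * (a + (1 - 1 / (N : ℝ)) * q) * K t
          + (1 - 1 / (N : ℝ)) ^ 2 * K t ^ 2 - (ε - q ^ 2)) t) →
      K T = c →
      (let Kbar := sSup (K '' Icc (0 : ℝ) T);
       let Kmin := sInf (K '' Icc (0 : ℝ) T);
       let glo := a + (1 - 1 / (N : ℝ)) * q + (1 - 1 / (N : ℝ)) ^ 2 * Kmin;
       let C := (1 - 1 / (N : ℝ)) ^ 2 *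
         ((1 - 1 / (N : ℝ)) ^ 2 * Kbar ^ 2 +
          (q + (1 - 1 / (N : ℝ)) * Kbar) ^ 2 *
            ((1 - Real.exp (-(2 * T * glo))) / glo * (1 - 1 / (N : ℝ)) ^ 4 * Kbar ^ 2 + 2));
       (1 - Real.exp (-(2 * T * glo))) / glo * C < 1) := by
  set ν : ℝ := 1 - 1 / (N : ℝ)
  have hν : ν ∈ Icc 0 1 := one_sub_one_div_natCast_mem_Icc N
  set M : ℝ := max c ((ε - q ^ 2) / 2)
  set C₀ : ℝ := M ^ 2 + (q + M) ^ 2 * (M ^ 2 + 2)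
  have hM : 0 ≤ M := hc.trans (le_max_left _ _)
  refine ⟨max 1 C₀, lt_max_of_lt_left one_pos, fun a ha K hK hKT ↦ ?_⟩
  have hνq : 0 ≤ ν * q := mul_nonneg hν.1 hq
  have ha1 : 1 < a := (le_max_left _ _).trans_lt ha
  have hK0 : ∀ t ∈ Icc 0 T, 0 ≤ K t :=
    le_of_riccati_subsolution hK (by linarith) (hKT ▸ hc)
  have hKM : ∀ t ∈ Icc 0 T, K t ≤ M :=
    le_of_riccati_supersolution hK
      (by linarith [le_max_right c ((ε - q ^ 2) / 2), mul_nonneg (sub_nonneg.2 ha1.le) hM,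
        mul_nonneg hνq hM, mul_nonneg (sq_nonneg ν) (sq_nonneg M)])
      (hKT ▸ le_max_left _ _)
  intro Kbar Kmin glo C
  have hKmin : 0 ≤ Kmin := Real.sInf_nonneg (by rintro _ ⟨t, ht, rfl⟩; exact hK0 t ht)
  have hKbar : Kbar ∈ Icc 0 M :=
    ⟨Real.sSup_nonneg (by rintro _ ⟨t, ht, rfl⟩; exact hK0 t ht),
      Real.sSup_le (by rintro _ ⟨t, ht, rfl⟩; exact hKM t ht) hM⟩
  have hglo : a ≤ glo := by linarith [mul_nonneg (sq_nonneg ν) hKmin]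
  have hE := one_sub_exp_neg_div_mem_Icc (x := 2 * T * glo) (γ := glo)
    (by positivity) (by linarith)
  have hE_le : (1 - exp (-(2 * T * glo))) / glo ≤ a⁻¹ :=
    hE.2.trans (inv_anti₀ (by linarith) hglo)
  have hC : C ≤ C₀ := convergence_constant_le hν hq
    ⟨hE.1, hE_le.trans (inv_le_one_of_one_le₀ ha1.le)⟩ hKbar
  calc (1 - exp (-(2 * T * glo))) / glo * C
      ≤ a⁻¹ * C₀ := (mul_le_mul_of_nonneg_left hC hE.1).trans
        (mul_le_mul_of_nonneg_right hE_le (by positivity))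
    _ < 1 := by
      rw [inv_mul_lt_one₀ (by linarith)]
      exact (le_max_right _ _).trans_lt ha

/-- Proposition 3.2, case (ii): strong mean reversion. With `N`, `T`,
`q`, `ε`, `c` fixed, there is `a₀ > 0` such that for every `a > a₀`, the C¹ solution
`K` on `[0,T]` of the Riccati terminal value problem (with `β = a + (1 − 1/N)q`)
satisfies the convergence condition `((1 − e^{−2Tγ̲})/γ̲) · C < 1`. -/
theorem convergence_condition_strong_mean_reversion
    (N : ℕ) (hN : 2 ≤ N) (T q ε c : ℝ)
    (hT : 0 < T) (hq : 0 ≤ q) (hc : 0 ≤ c) (hqε : q ^ 2 ≤ ε) :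
    ∃ a₀ > (0 : ℝ), ∀ a : ℝ, a₀ < a → ∀ K : ℝ → ℝ,
      (∀ t ∈ Icc (0 : ℝ) T, HasDerivAt K
        (2 * (a + (1 - 1 / (N : ℝ)) * q) * K t
          + (1 - 1 / (N : ℝ)) ^ 2 * K t ^ 2 - (ε - q ^ 2)) t) →
      K T = c →
      (let Kbar := sSup (K '' Icc (0 : ℝ) T);
       let Kmin := sInf (K '' Icc (0 : ℝ) T);
       let glo := a + (1 - 1 / (N : ℝ)) * q + (1 - 1 / (N : ℝ)) ^ 2 * Kmin;
       let C := (1 - 1 / (N : ℝ)) ^ 2 *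
         ((1 - 1 / (N : ℝ)) ^ 2 * Kbar ^ 2 +
          (q + (1 - 1 / (N : ℝ)) * Kbar) ^ 2 *
            ((1 - Real.exp (-(2 * T * glo))) / glo * (1 - 1 / (N : ℝ)) ^ 4 * Kbar ^ 2 + 2));
       (1 - Real.exp (-(2 * T * glo))) / glo * C < 1) :=
  convergence_condition_strong_mean_reversion_general N T q ε c hT hq hc hqε
end

section
/- (Proposition 3.2, case (iii): small terminal cost, small incentive and small remaining running cost.) Fix an integer N ≥ 2, a time horizon T > 0 and a > 0. Then there exists δ > 0 such that for all parameters q, ε, c with 0 ≤ q < δ, 0 ≤ c < δ, q² ≤ ε and 0 ≤ ε − q² < δ, the unique C¹ solution K on [0,T] of K'(t) = 2βK(t) + γ_N K(t)² − λ with K(T) = c satisfies the convergence condition ((1 − e^{−2Tγ̲})/γ̲) · C < 1. -/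
/-!
The Riccati field `f x = 2βx + γ_N x² − λ` is positive at any level `M > 0` with `λ < aM`, and
negative at `−a/2`. Going backward from `K T = c ∈ [0, M]`, the solution can cross neither level, so
`K` takes values in `[−a/2, M]`. Hence `γ̲ ≥ a/2`, the factor `(1 − e^{−2Tγ̲})/γ̲` is at most `2/a`,
and `C` is dominated by a polynomial in `M` vanishing at `0`; take `δ = min M (aM)` with `M` small.
-/

open Set Topology

/- Reversing time turns this into the forward fencing theorem
`image_le_of_deriv_right_lt_deriv_boundary` with the constant barrier `M`. -/
theorem autonomous_le_of_terminal_le {K f : ℝ → ℝ} {s T M : ℝ}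
    (hK : ∀ t ∈ Icc s T, HasDerivAt K (f (K t)) t) (hM : 0 < f M) (hKT : K T ≤ M) :
    ∀ t ∈ Icc s T, K t ≤ M := by
  have hrev : ∀ u ∈ Icc 0 (T - s), HasDerivAt (fun u => K (T - u)) (-f (K (T - u))) u := by
    intro u hu
    have hmem : T - u ∈ Icc s T := ⟨by linarith [hu.2], by linarith [hu.1]⟩
    simpa using (hK (T - u) hmem).comp_const_sub T u
  have key := image_le_of_deriv_right_lt_deriv_boundary (a := 0) (b := T - s)
    (B := fun _ => M) (B' := 0)
    (fun u hu => (hrev u hu).continuousAt.continuousWithinAt)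
    (fun u hu => (hrev u (Ico_subset_Icc_self hu)).hasDerivWithinAt)
    (by simpa using hKT) (fun _ => hasDerivAt_const _ M)
    (fun u _ hu => by simp only [hu, Pi.zero_apply]; linarith)
  intro t ht
  simpa using key (x := T - t) ⟨by linarith [ht.2], by linarith [ht.1]⟩

theorem le_autonomous_of_le_terminal {K f : ℝ → ℝ} {s T m : ℝ}
    (hK : ∀ t ∈ Icc s T, HasDerivAt K (f (K t)) t) (hm : f m < 0) (hKT : m ≤ K T) :
    ∀ t ∈ Icc s T, m ≤ K t := by
  have hneg := autonomous_le_of_terminal_le (K := -K) (f := fun y => -f (-y)) (M := -m)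
    (fun t ht => by simpa using (hK t ht).neg) (by simpa using hm) (by simpa using hKT)
  intro t ht
  simpa using hneg t ht

theorem riccati_mem_Icc_of_terminal_mem_Icc {K : ℝ → ℝ} {T a g q lam M : ℝ} (ha : 0 < a)
    (hM : 0 < M) (hg : g ∈ Icc (0 : ℝ) 1) (hq : 0 ≤ q) (hlam : lam ∈ Icc 0 (a * M))
    (hK : ∀ t ∈ Icc 0 T, HasDerivAt K (2 * (a + g * q) * K t + g ^ 2 * K t ^ 2 - lam) t)
    (hKT : K T ∈ Icc (-(a / 2)) M) :
    ∀ t ∈ Icc 0 T, K t ∈ Icc (-(a / 2)) M := by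
  let f : ℝ → ℝ := fun x => 2 * (a + g * q) * x + g ^ 2 * x ^ 2 - lam
  have hgq : 0 ≤ g * q := mul_nonneg hg.1 hq
  have hg2 : g ^ 2 ≤ 1 := pow_le_one₀ hg.1 hg.2
  have hfM : 0 < f M := by
    simp only [f]; nlinarith [mul_nonneg hgq hM.le, mul_pos ha hM, sq_nonneg (g * M), hlam.2]
  have hfa : f (-(a / 2)) < 0 := by
    simp only [f]; nlinarith [mul_le_mul_of_nonneg_right hg2 (sq_nonneg (a / 2)), hlam.1]
  exact fun t ht => ⟨le_autonomous_of_le_terminal (f := f) hK hfa hKT.1 t ht,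
    autonomous_le_of_terminal_le (f := f) hK hfM hKT.2 t ht⟩

theorem one_sub_exp_neg_div_nonneg {x γ : ℝ} (hx : 0 ≤ x) (hγ : 0 < γ) :
    0 ≤ (1 - Real.exp (-(x * γ))) / γ := by
  have : Real.exp (-(x * γ)) ≤ 1 := Real.exp_le_one_iff.mpr (by nlinarith)
  exact div_nonneg (by linarith) hγ.le

theorem one_sub_exp_neg_div_le_inv (x : ℝ) {γ : ℝ} (hγ : 0 < γ) :
    (1 - Real.exp (-(x * γ))) / γ ≤ γ⁻¹ := by
  rw [div_le_iff₀ hγ, inv_mul_cancel₀ hγ.ne']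
  linarith [Real.exp_pos (-(x * γ))]

/-- The constant `C` of condition (3.16), with `g = 1 - 1/N` and
`r = (1 - e^{-2Tγ̲})/γ̲`. -/
def convergenceConstant (g q Kbar r : ℝ) : ℝ :=
  g ^ 2 * (g ^ 2 * Kbar ^ 2 + (q + g * Kbar) ^ 2 * (r * g ^ 4 * Kbar ^ 2 + 2))

theorem convergenceConstant_nonneg {g q Kbar r : ℝ} (hr : 0 ≤ r) :
    0 ≤ convergenceConstant g q Kbar r := by
  unfold convergenceConstant; positivity

theorem convergenceConstant_le {g q Kbar r M R : ℝ} (hg : g ∈ Icc (0 : ℝ) 1)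
    (hq : q ∈ Icc 0 M) (hKbar : Kbar ∈ Icc 0 M) (hr : r ∈ Icc 0 R) :
    convergenceConstant g q Kbar r ≤ convergenceConstant 1 M M R := by
  obtain ⟨hg0, hg1⟩ := hg
  obtain ⟨hq0, hqM⟩ := hq
  obtain ⟨hK0, hKM⟩ := hKbar
  obtain ⟨hr0, hrR⟩ := hr
  have hR : 0 ≤ R := hr0.trans hrR
  unfold convergenceConstant
  gcongr

theorem exists_pos_mul_convergenceConstant_lt_one (R : ℝ) :
    ∃ M > 0, R * convergenceConstant 1 M M R < 1 := by
  have hcont : Continuous fun M => R * convergenceConstant 1 M M R := by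
    unfold convergenceConstant; fun_prop
  have hsmall : ∀ᶠ M in 𝓝[>] 0, R * convergenceConstant 1 M M R < 1 := by
    refine nhdsWithin_le_nhds (hcont.tendsto 0 |>.eventually (gt_mem_nhds ?_))
    simp [convergenceConstant]
  exact (hsmall.and self_mem_nhdsWithin).exists.imp fun M hM => ⟨hM.2, hM.1⟩

/-- Proposition 3.2, case (iii): small terminal cost, small incentive,
small remaining running cost. With `N`, `T` and `a > 0` fixed, there is `δ > 0` such
that for all `q, ε, c` with `0 ≤ q < δ`, `0 ≤ c < δ`, `q² ≤ ε` and `ε − q² < δ`,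
the C¹ solution `K` on `[0,T]` of the Riccati terminal value problem satisfies the
convergence condition `((1 − e^{−2Tγ̲})/γ̲) · C < 1`. -/
theorem convergence_condition_small_costs
    (N : ℕ) (hN : 2 ≤ N) (T a : ℝ) (hT : 0 < T) (ha : 0 < a) :
    ∃ δ > (0 : ℝ), ∀ q ε c : ℝ,
      0 ≤ q → q < δ → 0 ≤ c → c < δ → q ^ 2 ≤ ε → ε - q ^ 2 < δ →
      ∀ K : ℝ → ℝ,
      (∀ t ∈ Icc (0 : ℝ) T, HasDerivAt K
        (2 * (a + (1 - 1 / (N : ℝ)) * q) * K t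
          + (1 - 1 / (N : ℝ)) ^ 2 * K t ^ 2 - (ε - q ^ 2)) t) →
      K T = c →
      (let Kbar := sSup (K '' Icc (0 : ℝ) T);
       let Kmin := sInf (K '' Icc (0 : ℝ) T);
       let glo := a + (1 - 1 / (N : ℝ)) * q + (1 - 1 / (N : ℝ)) ^ 2 * Kmin;
       let C := (1 - 1 / (N : ℝ)) ^ 2 *
         ((1 - 1 / (N : ℝ)) ^ 2 * Kbar ^ 2 +
          (q + (1 - 1 / (N : ℝ)) * Kbar) ^ 2 *
            ((1 - Real.exp (-(2 * T * glo))) / glo * (1 - 1 / (N : ℝ)) ^ 4 * Kbar ^ 2 + 2));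
       (1 - Real.exp (-(2 * T * glo))) / glo * C < 1) := by
  obtain ⟨M, hM, hsmall⟩ := exists_pos_mul_convergenceConstant_lt_one (2 / a)
  refine ⟨min M (a * M), lt_min hM (mul_pos ha hM), ?_⟩
  intro q ε c hq0 hqδ hc0 hcδ hqε hεδ K hK hKT Kbar Kmin glo C
  have hδM : min M (a * M) ≤ M := min_le_left _ _
  have hδaM : min M (a * M) ≤ a * M := min_le_right _ _
  set g : ℝ := 1 - 1 / (N : ℝ)
  have hg : g ∈ Icc (0 : ℝ) 1 :=
    ⟨sub_nonneg.mpr (div_le_one_of_le₀ (by exact_mod_cast (by omega : 1 ≤ N)) (Nat.cast_nonneg N)),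
      sub_le_self _ (by positivity)⟩
  have hKmem : K '' Icc 0 T ⊆ Icc (-(a / 2)) M := image_subset_iff.mpr <|
    riccati_mem_Icc_of_terminal_mem_Icc ha hM hg hq0 ⟨by linarith, by linarith⟩ hK
      (hKT ▸ ⟨by linarith, by linarith⟩)
  have hne : (K '' Icc 0 T).Nonempty := (nonempty_Icc.mpr hT.le).image K
  have hKbar : Kbar ∈ Icc 0 M :=
    ⟨hKT ▸ hc0 |>.trans
        (le_csSup (bddAbove_Icc.mono hKmem) ⟨T, right_mem_Icc.mpr hT.le, rfl⟩),
      csSup_le hne fun _ hy => (hKmem hy).2⟩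
  have hKmin : -(a / 2) ≤ Kmin := le_csInf hne fun _ hy => (hKmem hy).1
  have hglo : a / 2 ≤ glo := by
    nlinarith [mul_le_mul_of_nonneg_left hKmin (sq_nonneg g), pow_le_one₀ hg.1 hg.2 (n := 2),
      mul_nonneg hg.1 hq0]
  have hr : (1 - Real.exp (-(2 * T * glo))) / glo ∈ Icc 0 (2 / a) :=
    ⟨one_sub_exp_neg_div_nonneg (by positivity) (by linarith),
      (one_sub_exp_neg_div_le_inv _ (by linarith)).trans
        (by rw [← inv_div]; exact inv_anti₀ (by positivity) hglo)⟩
  calc (1 - Real.exp (-(2 * T * glo))) / glo * convergenceConstant g q Kbar _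
      ≤ 2 / a * convergenceConstant 1 M M (2 / a) :=
        mul_le_mul hr.2 (convergenceConstant_le hg ⟨hq0, by linarith⟩ hKbar hr)
          (convergenceConstant_nonneg hr.1) (by positivity)
    _ < 1 := hsmall
end
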